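/- arXiv:2312.13124 — 13 statements merged into one kernel-verified Lean document; each statement's English description precedes it below -/
import Mathlib

section
/- Let d ≥ 2, let X_d = ℕ → Fin d be the boundary of the d-regular rooted tree with its standard ultrametric, and let G be a countable subgroup of the group of bijective isometries of X_d. Then the map St^p from the space of nonempty compact subsets of X_d, equipped with the Hausdorff metric, to the power set of G equipped with the σ-algebra generated by the evaluation sets {S : g ∈ S} (g ∈ G), sending a compact set C to its pointwise stabilizer {g ∈ G : g x = x for all x ∈ C}, is Borel measurable. -/
open Set MeasureTheory TopologicalSpace

noncomputable section

/-- The boundary of the `d`-regular rooted tree: infinite words over a `d`-letter alphabet. -/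
abbrev XX (d : ℕ) : Type := ℕ → Fin d

/-- The standard ultrametric: `dist x y = (1/2)^n` where `n` is the first index where `x,y`
differ. -/
noncomputable instance XXms (d : ℕ) : MetricSpace (XX d) := PiNat.metricSpace

/-- The cylinder determined by a finite word `w`: all infinite words starting with `w`. -/
def Cyl {d : ℕ} (w : List (Fin d)) : Set (XX d) :=
  {x | ∀ i : Fin w.length, x i.1 = w.get i}

/-- `G` acts transitively on every level of the tree. -/
def LevelTransitive {d : ℕ} (G : Subgroup (XX d ≃ᵢ XX d)) : Prop :=
  ∀ u v : List (Fin d), u.length = v.length →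
    ∃ g ∈ G, (g : XX d ≃ᵢ XX d) '' Cyl u = Cyl v

/-- The rigid stabilizer of the vertex (finite word) `v`: elements of `G` supported in
`Cyl v`. -/
def rist {d : ℕ} (G : Subgroup (XX d ≃ᵢ XX d)) (v : List (Fin d)) :
    Set (XX d ≃ᵢ XX d) :=
  {g | g ∈ G ∧ ∀ x : XX d, g x ≠ x → x ∈ Cyl v}

/-- The rigid stabilizer of level `n`: the subgroup generated by the rigid stabilizers of
all vertices of level `n`. -/
def ristLevel {d : ℕ} (G : Subgroup (XX d ≃ᵢ XX d)) (n : ℕ) :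
    Subgroup (XX d ≃ᵢ XX d) :=
  Subgroup.closure (⋃ v ∈ {w : List (Fin d) | w.length = n}, rist G v)

/-- A weakly branch group: level-transitive with all rigid vertex stabilizers nontrivial. -/
def WeaklyBranch {d : ℕ} (G : Subgroup (XX d ≃ᵢ XX d)) : Prop :=
  LevelTransitive G ∧ ∀ v : List (Fin d), ∃ g ∈ rist G v, g ≠ 1

/-- A branch group: weakly branch and every rigid level stabilizer has finite index. -/
def Branch {d : ℕ} (G : Subgroup (XX d ≃ᵢ XX d)) : Prop :=
  WeaklyBranch G ∧ ∀ n : ℕ, (ristLevel G n).index ≠ 0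

/-- the pointwise-stabilizer map, from nonempty compact subsets of the boundary
of the `d`-regular tree (with the Hausdorff metric / its Borel σ-algebra) to the power set of
a countable group `G` of bijective isometries (with the σ-algebra generated by the evaluation
sets), is Borel measurable. -/
theorem stmt_0 (d : ℕ) (hd : 2 ≤ d) (G : Subgroup (XX d ≃ᵢ XX d)) (hG : Countable G) :
    @Measurable (NonemptyCompacts (XX d)) (Set G)
      (borel (NonemptyCompacts (XX d)))
      (MeasurableSpace.generateFrom {A : Set (Set G) | ∃ g : G, A = {S : Set G | g ∈ S}})
      (fun C => {g : G | ∀ x ∈ (C : Set (XX d)), (g : XX d ≃ᵢ XX d) x = x}) := by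
  letI : MeasurableSpace (NonemptyCompacts (XX d)) := borel (NonemptyCompacts (XX d))
  haveI : BorelSpace (NonemptyCompacts (XX d)) := ⟨rfl⟩
  apply measurable_generateFrom
  rintro A ⟨g, rfl⟩
  have hset : (fun C : NonemptyCompacts (XX d) =>
      {h : G | ∀ x ∈ (C : Set (XX d)), (h : XX d ≃ᵢ XX d) x = x}) ⁻¹' {S : Set G | g ∈ S}
      = {C : NonemptyCompacts (XX d) | ∀ x ∈ (C : Set (XX d)), (g : XX d ≃ᵢ XX d) x = x} := rfl
  rw [hset]
  have hclosed : IsClosed {C : NonemptyCompacts (XX d) |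
      ∀ x ∈ (C : Set (XX d)), (g : XX d ≃ᵢ XX d) x = x} := by
    rw [← isOpen_compl_iff, Metric.isOpen_iff]
    intro C hC
    simp only [mem_compl_iff, mem_setOf_eq, not_forall] at hC
    obtain ⟨x, hxC, hgx⟩ := hC
    have hopen : IsOpen {y : XX d | (g : XX d ≃ᵢ XX d) y ≠ y} :=
      isOpen_ne_fun (g : XX d ≃ᵢ XX d).continuous continuous_id
    obtain ⟨ε, hε, hball⟩ := Metric.isOpen_iff.mp hopen x hgx
    refine ⟨ε, hε, ?_⟩
    intro D hD
    rw [Metric.mem_ball, Metric.NonemptyCompacts.dist_eq] at hD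
    have hfin : EMetric.hausdorffEdist (C : Set (XX d)) (D : Set (XX d)) ≠ ⊤ :=
      Metric.hausdorffEdist_ne_top_of_nonempty_of_bounded C.nonempty D.nonempty
        C.isCompact.isBounded D.isCompact.isBounded
    rw [Metric.hausdorffDist_comm] at hD
    obtain ⟨y, hyD, hxy⟩ := Metric.exists_dist_lt_of_hausdorffDist_lt hxC hD hfin
    have hy : (g : XX d ≃ᵢ XX d) y ≠ y := by
      apply hball
      rw [Metric.mem_ball, dist_comm]
      exact hxy
    simp only [mem_compl_iff, mem_setOf_eq, not_forall]
    exact ⟨y, hyD, hy⟩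
  exact hclosed.measurableSet
end
end

section
/- Let G be a countable group and let μ be a probability measure on the space Sub(G) of subgroups of G (with the σ-algebra generated by the sets {H : g ∈ H}, g ∈ G) that is invariant under the conjugation action g·H = gHg⁻¹. Then the function ψ_μ : G → ℝ defined by ψ_μ(g) = μ({H ∈ Sub(G) : g ∈ H}) is a character on G: ψ_μ(g₁g₂) = ψ_μ(g₂g₁) for all g₁, g₂ ∈ G, ψ_μ(e) = 1, and for every n and all g₁, …, g_n ∈ G the n×n matrix with entries ψ_μ(g_i g_j⁻¹) is positive semidefinite. -/
open MeasureTheory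

/-- The σ-algebra on the space of subgroups of `G` generated by the sets
`{H : g ∈ H}`, `g ∈ G` (the Borel σ-algebra of the product topology from `{0,1}^G`). -/
instance subgroupMeasurableSpace (G : Type*) [Group G] : MeasurableSpace (Subgroup G) :=
  MeasurableSpace.generateFrom {A : Set (Subgroup G) | ∃ g : G, A = {H : Subgroup G | g ∈ H}}

/-
Conjugating by `g₁` maps `{H : g₁g₂ ∈ H}` onto `{H : g₂g₁ ∈ H}`, so invariance makes
`ψ_μ` central, and `ψ_μ(1) = μ(Sub G) = 1`. For positive semidefiniteness write
`ψ_μ(g_i g_j⁻¹) = ∫ 1[g_i g_j⁻¹ ∈ H] dμ(H)`: for a fixed subgroup `H`, `g_i g_j⁻¹ ∈ H` says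
that `g_i` and `g_j` lie in the same right coset of `H`, and the indicator matrix of an
equivalence relation is a sum of rank-one matrices `v vᵀ`, one per class. An integral of positive
semidefinite matrices is positive semidefinite.
-/

namespace Matrix

theorem posSemidef_ite_eq {ι α R : Type*} [Fintype ι] [DecidableEq α]
    [CommRing R] [PartialOrder R] [StarRing R] [StarOrderedRing R] (q : ι → α) :
    (of fun i j => if q i = q j then (1 : R) else 0).PosSemidef := by
  let v : α → ι → R := fun c i => if q i = c then 1 else 0
  have hsum : (of fun i j => if q i = q j then (1 : R) else 0) =
      ∑ c ∈ Finset.univ.image q, vecMulVec (v c) (star (v c)) := by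
    ext i j
    simp only [of_apply, sum_apply, vecMulVec_apply, Pi.star_apply, v]
    rw [Finset.sum_eq_single_of_mem (q i) (Finset.mem_image_of_mem q (Finset.mem_univ i))]
    · split_ifs <;> simp_all
    · intro c _ hc
      simp [Ne.symm hc]
  rw [hsum]
  exact posSemidef_sum _ fun c _ => posSemidef_vecMulVec_self_star (v c)

theorem posSemidef_of_integral {n Ω : Type*} [Fintype n] [MeasurableSpace Ω] {μ : Measure Ω}
    {f : n → n → Ω → ℝ} (hf : ∀ i j, Integrable (f i j) μ)
    (hpos : ∀ ω, (of fun i j => f i j ω).PosSemidef) :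
    (of fun i j => ∫ ω, f i j ω ∂μ).PosSemidef := by
  refine PosSemidef.of_dotProduct_mulVec_nonneg ?_ fun x => ?_
  · ext i j
    simp only [conjTranspose_apply, of_apply, star_trivial]
    congr 1 with ω
    simpa using congr_fun₂ (hpos ω).1 i j
  · have hquad : star x ⬝ᵥ ((of fun i j => ∫ ω, f i j ω ∂μ) *ᵥ x) =
        ∫ ω, star x ⬝ᵥ ((of fun i j => f i j ω) *ᵥ x) ∂μ := by
      simp only [dotProduct, mulVec, of_apply, Finset.mul_sum, star_trivial]
      rw [integral_finsetSum _ fun i _ => integrable_finsetSum _ fun j _ =>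
        ((hf i j).mul_const _).const_mul _]
      refine Finset.sum_congr rfl fun i _ => ?_
      rw [integral_finsetSum _ fun j _ => ((hf i j).mul_const _).const_mul _]
      simp only [integral_const_mul, integral_mul_const]
    rw [hquad]
    exact integral_nonneg fun ω => (hpos ω).dotProduct_mulVec_nonneg x

end Matrix

namespace Subgroup

variable {G : Type*} [Group G]

theorem measurableSet_setOf_mem (g : G) : MeasurableSet {H : Subgroup G | g ∈ H} :=
  MeasurableSpace.measurableSet_generateFrom ⟨g, rfl⟩

theorem mul_inv_mem_iff_rightRel_eq (H : Subgroup G) (a b : G) :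
    a * b⁻¹ ∈ H ↔ (⟦a⟧ : Quotient (QuotientGroup.rightRel H)) = ⟦b⟧ := by
  rw [Quotient.eq, QuotientGroup.rightRel_apply, ← H.inv_mem_iff, mul_inv_rev, inv_inv]

theorem preimage_conj_setOf_mul_mem (a b : G) :
    (fun H : Subgroup G => H.map (MulAut.conj a).toMonoidHom) ⁻¹' {H | a * b ∈ H} =
      {H | b * a ∈ H} := by
  ext H
  simp only [Set.mem_preimage, Set.mem_ofPred_eq, mem_map_equiv, MulAut.conj_symm_apply]
  rw [show a⁻¹ * (a * b) * a = b * a by group]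

end Subgroup

theorem stmt_1_general {G : Type*} [Group G]
    (μ : Measure (Subgroup G)) [IsProbabilityMeasure μ]
    (hinv : ∀ g : G, MeasurePreserving
      (fun H : Subgroup G => Subgroup.map (MulAut.conj g).toMonoidHom H) μ μ) :
    (∀ g₁ g₂ : G,
      (μ {H : Subgroup G | g₁ * g₂ ∈ H}).toReal = (μ {H : Subgroup G | g₂ * g₁ ∈ H}).toReal) ∧
    (μ {H : Subgroup G | (1 : G) ∈ H}).toReal = 1 ∧
    (∀ (n : ℕ) (g : Fin n → G),
      (Matrix.of fun i j : Fin n =>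
        (μ {H : Subgroup G | g i * (g j)⁻¹ ∈ H}).toReal).PosSemidef) := by
  classical
  refine ⟨fun g₁ g₂ => ?_, by simp, fun n g => ?_⟩
  · rw [← (hinv g₁).measure_preimage (Subgroup.measurableSet_setOf_mem _).nullMeasurableSet,
      Subgroup.preimage_conj_setOf_mul_mem]
  · have hentry : ∀ i j, (μ {H : Subgroup G | g i * (g j)⁻¹ ∈ H}).toReal =
        ∫ H, if g i * (g j)⁻¹ ∈ H then (1 : ℝ) else 0 ∂μ := fun i j => by
      rw [← measureReal_def, ← integral_indicator_one (Subgroup.measurableSet_setOf_mem _)]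
      rfl
    simp_rw [hentry]
    refine Matrix.posSemidef_of_integral (fun i j => ?_) fun H => ?_
    · exact (integrable_const (1 : ℝ)).indicator (Subgroup.measurableSet_setOf_mem _)
    · simp_rw [Subgroup.mul_inv_mem_iff_rightRel_eq]
      exact Matrix.posSemidef_ite_eq _

/-- for an invariant random subgroup `μ` of a countable group `G` (a probability
measure on `Sub(G)` invariant under conjugation), the function
`ψ_μ(g) = μ {H : g ∈ H}` is a character: it is central, `ψ_μ(1) = 1`, and all matrices
`(ψ_μ(g_i g_j⁻¹))` are positive semidefinite. -/
theorem stmt_1 {G : Type*} [Group G] [Countable G]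
    (μ : Measure (Subgroup G)) [IsProbabilityMeasure μ]
    (hinv : ∀ g : G, MeasurePreserving
      (fun H : Subgroup G => Subgroup.map (MulAut.conj g).toMonoidHom H) μ μ) :
    (∀ g₁ g₂ : G,
      (μ {H : Subgroup G | g₁ * g₂ ∈ H}).toReal = (μ {H : Subgroup G | g₂ * g₁ ∈ H}).toReal) ∧
    (μ {H : Subgroup G | (1 : G) ∈ H}).toReal = 1 ∧
    (∀ (n : ℕ) (g : Fin n → G),
      (Matrix.of fun i j : Fin n =>
        (μ {H : Subgroup G | g i * (g j)⁻¹ ∈ H}).toReal).PosSemidef) :=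
  stmt_1_general μ hinv
end

section
/- Let G be a countable group containing a normal subgroup H ≠ G such that the quotient G/H is virtually abelian (contains an abelian subgroup of finite index). Then there exists an indecomposable character χ : G → ℂ and an element g ∈ G such that χ(g) is not a nonnegative real number. -/
open scoped ComplexOrder

/-- A character on a group `G`: central, normalized at the identity, with all matrices
`(χ(g_i g_j⁻¹))` positive semidefinite. -/
def IsCharacter {G : Type*} [Group G] (χ : G → ℂ) : Prop :=
  (∀ a b : G, χ (a * b) = χ (b * a)) ∧ χ 1 = 1 ∧
  ∀ (n : ℕ) (g : Fin n → G),
    (Matrix.of fun i j : Fin n => χ (g i * (g j)⁻¹)).PosSemidef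

/-- An indecomposable character: one that is not a proper convex combination of two distinct
characters. -/
def IsIndecomposableCharacter {G : Type*} [Group G] (χ : G → ℂ) : Prop :=
  IsCharacter χ ∧
  ¬ ∃ (α : ℝ) (χ₁ χ₂ : G → ℂ), 0 < α ∧ α < 1 ∧ IsCharacter χ₁ ∧ IsCharacter χ₂ ∧
      χ₁ ≠ χ₂ ∧ χ = fun g => (α : ℂ) * χ₁ g + ((1 - α : ℝ) : ℂ) * χ₂ g

/-!
The characters of `G` form a compact convex subset of `G → ℂ`, so by Krein–Milman they lie in the
closed convex hull of the extreme points, and extreme points are indecomposable. As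
`{χ | 0 ≤ χ g}` is closed and convex, it therefore suffices to find one character with a value
outside `[0, ∞)`. If `G/H` is abelian, a unitary character of `G/H` that is nontrivial somewhere
does (characters into `ℚ/ℤ` separate points). Otherwise a proper abelian subgroup of finite index
in `G/H` has a proper normal core, giving a nontrivial finite quotient `Q` of `G`; there the
normalized character of the regular representation minus the trivial one is negative off `1`.
-/

open Matrix

namespace IsCharacter

variable {G Q : Type*} [Group G] [Group Q] {χ : G → ℂ}

lemma comp {χ : Q → ℂ} (hχ : IsCharacter χ) (φ : G →* Q) : IsCharacter (χ ∘ φ) :=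
  ⟨fun a b => by simp [hχ.1], by simp [hχ.2.1], fun n g => by simpa using hχ.2.2 n (φ ∘ g)⟩

lemma apply_inv (hχ : IsCharacter χ) (g : G) : χ g⁻¹ = star (χ g) := by
  simpa using ((hχ.2.2 2 ![1, g]).1.apply 0 1).symm

lemma norm_le_one (hχ : IsCharacter χ) (g : G) : ‖χ g‖ ≤ 1 := by
  have hdet := (hχ.2.2 2 ![g, 1]).det_nonneg
  rw [det_fin_two] at hdet
  simp only [of_apply, Matrix.cons_val_zero, Matrix.cons_val_one, inv_one, mul_one, one_mul,
    mul_inv_cancel, hχ.2.1, hχ.apply_inv, Complex.star_def, Complex.mul_conj] at hdet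
  rw [← Complex.ofReal_one, ← Complex.ofReal_sub, Complex.zero_le_real, sub_nonneg,
    Complex.normSq_eq_norm_sq] at hdet
  exact (sq_le_one_iff₀ (norm_nonneg _)).mp hdet

end IsCharacter

lemma Matrix.isClosed_setOf_posSemidef {n : Type*} [Fintype n] :
    IsClosed {M : Matrix n n ℂ | M.PosSemidef} := by
  simp only [posSemidef_iff_dotProduct_mulVec, IsHermitian, Set.ofPred_and, Set.ofPred_forall]
  exact (isClosed_eq continuous_id.matrix_conjTranspose continuous_id).inter
    (isClosed_iInter fun x => isClosed_le continuous_const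
      (continuous_const.dotProduct (continuous_id.matrix_mulVec continuous_const)))

section CharacterSet

variable {G : Type*} [Group G]

lemma isClosed_setOf_isCharacter : IsClosed {χ : G → ℂ | IsCharacter χ} := by
  simp only [IsCharacter, Set.ofPred_and, Set.ofPred_forall]
  refine .inter ?_ (.inter ?_ ?_)
  · exact isClosed_iInter fun a => isClosed_iInter fun b => isClosed_eq (by fun_prop) (by fun_prop)
  · exact isClosed_eq (by fun_prop) (by fun_prop)
  · exact isClosed_iInter fun n => isClosed_iInter fun g =>
      isClosed_setOf_posSemidef.preimage (by fun_prop)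

lemma isCompact_setOf_isCharacter : IsCompact {χ : G → ℂ | IsCharacter χ} :=
  (isCompact_univ_pi fun _ => isCompact_closedBall (0 : ℂ) 1).of_isClosed_subset
    isClosed_setOf_isCharacter fun _ hχ g _ => by simpa using hχ.norm_le_one g

lemma convex_setOf_isCharacter : Convex ℝ {χ : G → ℂ | IsCharacter χ} := by
  rintro χ₁ hχ₁ χ₂ hχ₂ a b ha hb hab
  refine ⟨fun x y => by simp [hχ₁.1 x y, hχ₂.1 x y], ?_, fun n g => ?_⟩
  · simp [hχ₁.2.1, hχ₂.2.1, ← Complex.ofReal_add, hab]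
  · have hM : (of fun i j : Fin n => (a • χ₁ + b • χ₂) (g i * (g j)⁻¹)) =
        a • of (fun i j => χ₁ (g i * (g j)⁻¹)) + b • of (fun i j => χ₂ (g i * (g j)⁻¹)) := by
      ext; simp
    rw [hM]
    exact ((hχ₁.2.2 n g).smul ha).add ((hχ₂.2.2 n g).smul hb)

lemma isIndecomposableCharacter_of_mem_extremePoints {χ : G → ℂ}
    (hχ : χ ∈ Set.extremePoints ℝ {χ : G → ℂ | IsCharacter χ}) :
    IsIndecomposableCharacter χ := by
  refine ⟨hχ.1, ?_⟩
  rintro ⟨α, χ₁, χ₂, h0, h1, hχ₁, hχ₂, hne, heq⟩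
  subst heq
  have hseg : (fun g => (α : ℂ) * χ₁ g + ((1 - α : ℝ) : ℂ) * χ₂ g) ∈ openSegment ℝ χ₁ χ₂ :=
    ⟨α, 1 - α, h0, by linarith, by ring, by ext; simp⟩
  have h := (mem_extremePoints.mp hχ).2 χ₁ hχ₁ χ₂ hχ₂ hseg
  exact hne (h.1.trans h.2.symm)

lemma exists_isIndecomposableCharacter_not_nonneg {χ : G → ℂ} (hχ : IsCharacter χ) {g : G}
    (hg : ¬ 0 ≤ χ g) : ∃ ψ : G → ℂ, IsIndecomposableCharacter ψ ∧ ¬ 0 ≤ ψ g := by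
  by_contra! h
  have hclosed : IsClosed {f : G → ℂ | 0 ≤ f g} := isClosed_Ici.preimage (continuous_apply g)
  have hconv : Convex ℝ {f : G → ℂ | 0 ≤ f g} :=
    (convex_Ici 0).linear_preimage (LinearMap.proj (R := ℝ) (φ := fun _ : G => ℂ) g)
  have hsub : {χ : G → ℂ | IsCharacter χ} ⊆ {f | 0 ≤ f g} := by
    rw [← closure_convexHull_extremePoints isCompact_setOf_isCharacter convex_setOf_isCharacter]
    exact closure_minimal (convexHull_min
      (fun ψ hψ => h ψ (isIndecomposableCharacter_of_mem_extremePoints hψ)) hconv) hclosed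
  exact hg (hsub hχ)

end CharacterSet

lemma isCharacter_coe_circle {G : Type*} [Group G] (ψ : G →* Circle) :
    IsCharacter fun g => (ψ g : ℂ) := by
  refine ⟨fun a b => by simp [mul_comm], by simp, fun n g => ?_⟩
  have hM : (of fun i j : Fin n => (ψ (g i * (g j)⁻¹) : ℂ)) =
      vecMulVec (fun i => (ψ (g i) : ℂ)) (star fun i => (ψ (g i) : ℂ)) := by
    ext i j; simp [vecMulVec_apply, ← Circle.coe_inv_eq_conj]
  rw [hM]
  exact posSemidef_vecMulVec_self_star _

lemma Circle.not_nonneg_coe {z : Circle} (hz : z ≠ 1) : ¬ 0 ≤ (z : ℂ) := fun h =>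
  hz <| Circle.coe_eq_one.mp <| by
    simpa only [Circle.norm_coe, Complex.ofReal_one] using Complex.eq_coe_norm_of_nonneg h

noncomputable def AddCircle.ratToReal : AddCircle (1 : ℚ) →+ AddCircle (1 : ℝ) :=
  QuotientAddGroup.map _ _ (Rat.castHom ℝ).toAddMonoidHom <| by
    rintro _ ⟨n, rfl⟩
    exact ⟨n, by simp⟩

lemma AddCircle.ratToReal_injective : Function.Injective AddCircle.ratToReal := by
  rw [injective_iff_map_eq_zero]
  intro x hx
  induction x using QuotientAddGroup.induction_on with
  | H q =>
    obtain ⟨n, hn⟩ := (AddCircle.coe_eq_zero_iff 1).mp hx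
    exact (AddCircle.coe_eq_zero_iff 1).mpr ⟨n, by simp at hn ⊢; exact_mod_cast hn⟩

lemma exists_monoidHom_circle_apply_ne_one {Q : Type*} [CommGroup Q] {q : Q} (hq : q ≠ 1) :
    ∃ ψ : Q →* Circle, ψ q ≠ 1 := by
  obtain ⟨c, hc⟩ :=
    CharacterModule.exists_character_apply_ne_zero_of_ne_zero (a := Additive.ofMul q) hq
  refine ⟨{ toFun x := AddCircle.toCircle (AddCircle.ratToReal (c (Additive.ofMul x)))
            map_one' := by simp
            map_mul' x y := by simp [AddCircle.toCircle_add] }, fun h => hc ?_⟩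
  refine (map_eq_zero_iff _ AddCircle.ratToReal_injective).mp
    (AddCircle.injective_toCircle one_ne_zero ?_)
  simpa using h

lemma posSemidef_ite_eq_sub_inv_card {Q ι : Type*} [Fintype Q] [DecidableEq Q] [Nonempty Q]
    [Fintype ι] (c : ι → Q) :
    (of fun i j => (if c i = c j then 1 else 0 : ℂ) - (Fintype.card Q : ℂ)⁻¹).PosSemidef := by
  set A : Matrix Q ι ℂ := of fun t i => (if c i = t then 1 else 0) - (Fintype.card Q : ℂ)⁻¹
  have hA : (of fun i j => (if c i = c j then 1 else 0 : ℂ) - (Fintype.card Q : ℂ)⁻¹) = Aᴴ * A := by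
    ext i j
    simp [A, mul_apply, sub_mul, mul_sub, Finset.sum_sub_distrib, ite_mul, mul_ite, eq_comm]
  rw [hA]
  exact posSemidef_conjTranspose_mul_self A

/-- `(|Q| δ₁ - 1) / (|Q| - 1)`: the normalized character of the regular representation of a
finite group `Q` with the trivial representation removed. -/
noncomputable def reducedRegularCharacter (Q : Type*) [Group Q] : Q → ℂ :=
  open Classical in fun q => if q = 1 then 1 else -((Nat.card Q : ℂ) - 1)⁻¹

section ReducedRegularCharacter

variable {Q : Type*} [Group Q] [Finite Q] [Nontrivial Q]

lemma isCharacter_reducedRegularCharacter : IsCharacter (reducedRegularCharacter Q) := by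
  classical
  have := Fintype.ofFinite Q
  have hr : (1 : ℝ) < Fintype.card Q := by exact_mod_cast Fintype.one_lt_card
  refine ⟨fun a b => by simp [reducedRegularCharacter, mul_eq_one_comm],
    by simp [reducedRegularCharacter], fun n g => ?_⟩
  have hM : (of fun i j : Fin n => reducedRegularCharacter Q (g i * (g j)⁻¹)) =
      (Fintype.card Q / (Fintype.card Q - 1) : ℝ) •
        of fun i j => (if g i = g j then 1 else 0 : ℂ) - (Fintype.card Q : ℂ)⁻¹ := by
    ext i j
    have : (Fintype.card Q : ℂ) - 1 ≠ 0 := sub_ne_zero.mpr (by exact_mod_cast hr.ne')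
    by_cases h : g i = g j <;>
      simp [reducedRegularCharacter, h, mul_inv_eq_one, Nat.card_eq_fintype_card] <;> field_simp
  rw [hM]
  exact (posSemidef_ite_eq_sub_inv_card g).smul (div_nonneg (by positivity) (sub_nonneg.mpr hr.le))

lemma reducedRegularCharacter_neg {q : Q} (hq : q ≠ 1) : reducedRegularCharacter Q q < 0 := by
  have hr : (1 : ℝ) < Nat.card Q := by exact_mod_cast Finite.one_lt_card
  have : reducedRegularCharacter Q q = ((-((Nat.card Q : ℝ) - 1)⁻¹ : ℝ) : ℂ) := by
    simp [reducedRegularCharacter, hq]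
  rw [this, ← Complex.ofReal_zero, Complex.real_lt_real, neg_neg_iff_pos, inv_pos, sub_pos]
  exact hr

end ReducedRegularCharacter

section ExistsNotNonneg

variable {G Q : Type*} [Group G] [Group Q]

lemma exists_isCharacter_not_nonneg_of_surjective {φ : G →* Q} (hφ : Function.Surjective φ)
    (h : ∃ χ : Q → ℂ, IsCharacter χ ∧ ∃ q, ¬ 0 ≤ χ q) :
    ∃ χ : G → ℂ, IsCharacter χ ∧ ∃ g, ¬ 0 ≤ χ g := by
  obtain ⟨χ, hχ, q, hq⟩ := h
  obtain ⟨g, rfl⟩ := hφ q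
  exact ⟨χ ∘ φ, hχ.comp φ, g, hq⟩

lemma exists_isCharacter_not_nonneg_of_commGroup {A : Type*} [CommGroup A] [Nontrivial A] :
    ∃ χ : A → ℂ, IsCharacter χ ∧ ∃ a, ¬ 0 ≤ χ a := by
  obtain ⟨a, ha⟩ := exists_ne (1 : A)
  obtain ⟨ψ, hψ⟩ := exists_monoidHom_circle_apply_ne_one ha
  exact ⟨_, isCharacter_coe_circle ψ, a, Circle.not_nonneg_coe hψ⟩

lemma exists_isCharacter_not_nonneg_of_finite [Finite Q] [Nontrivial Q] :
    ∃ χ : Q → ℂ, IsCharacter χ ∧ ∃ q, ¬ 0 ≤ χ q := by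
  obtain ⟨q, hq⟩ := exists_ne (1 : Q)
  exact ⟨_, isCharacter_reducedRegularCharacter, q, (reducedRegularCharacter_neg hq).not_ge⟩

lemma exists_isCharacter_not_nonneg_of_virtuallyAbelian_quotient (H : Subgroup G) [H.Normal]
    (hH : H ≠ ⊤) (hva : ∃ A : Subgroup (G ⧸ H), A.index ≠ 0 ∧ ∀ a b : A, a * b = b * a) :
    ∃ χ : G → ℂ, IsCharacter χ ∧ ∃ g, ¬ 0 ≤ χ g := by
  obtain ⟨A, hA, hcomm⟩ := hva
  have : Nontrivial (G ⧸ H) := QuotientGroup.nontrivial_iff.mpr hH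
  by_cases hAtop : A = ⊤
  · subst hAtop
    let : CommGroup (G ⧸ H) :=
      { mul_comm a b := congrArg Subtype.val (hcomm ⟨a, trivial⟩ ⟨b, trivial⟩) }
    exact exists_isCharacter_not_nonneg_of_surjective (QuotientGroup.mk'_surjective H)
      exists_isCharacter_not_nonneg_of_commGroup
  · have : A.FiniteIndex := ⟨hA⟩
    have : Nontrivial ((G ⧸ H) ⧸ A.normalCore) :=
      QuotientGroup.nontrivial_iff.mpr fun h => hAtop (top_le_iff.mp (h ▸ A.normalCore_le))
    exact exists_isCharacter_not_nonneg_of_surjective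
      (φ := (QuotientGroup.mk' A.normalCore).comp (QuotientGroup.mk' H))
      ((QuotientGroup.mk'_surjective _).comp (QuotientGroup.mk'_surjective H))
      exists_isCharacter_not_nonneg_of_finite

end ExistsNotNonneg

theorem stmt_3_general {G : Type*} [Group G] (H : Subgroup G) [H.Normal]
    (hH : H ≠ ⊤)
    (hva : ∃ A : Subgroup (G ⧸ H), A.index ≠ 0 ∧ ∀ a b : A, a * b = b * a) :
    ∃ χ : G → ℂ, IsIndecomposableCharacter χ ∧
      ∃ g : G, ¬ ∃ r : ℝ, 0 ≤ r ∧ χ g = (r : ℂ) := by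
  obtain ⟨χ, hχ, g, hg⟩ := exists_isCharacter_not_nonneg_of_virtuallyAbelian_quotient H hH hva
  obtain ⟨ψ, hψ, hψg⟩ := exists_isIndecomposableCharacter_not_nonneg hχ hg
  refine ⟨ψ, hψ, g, ?_⟩
  rintro ⟨r, hr, hψr⟩
  exact hψg (hψr ▸ Complex.zero_le_real.mpr hr)

/-- if a countable group `G` has a proper normal subgroup `H` with `G/H`
virtually abelian, then `G` admits an indecomposable character taking a value that is not a
nonnegative real number. -/
theorem stmt_3 {G : Type*} [Group G] [Countable G] (H : Subgroup G) [H.Normal]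
    (hH : H ≠ ⊤)
    (hva : ∃ A : Subgroup (G ⧸ H), A.index ≠ 0 ∧ ∀ a b : A, a * b = b * a) :
    ∃ χ : G → ℂ, IsIndecomposableCharacter χ ∧
      ∃ g : G, ¬ ∃ r : ℝ, 0 ≤ r ∧ χ g = (r : ℂ) :=
  stmt_3_general H hH hva
end

section
/- Let d ≥ 2 and let G be a weakly branch group of bijective isometries of X_d = ℕ → Fin d. If B₁ and B₂ are closed subsets of X_d with B₁ ≠ B₂, then their pointwise stabilizers in G differ: {g ∈ G : g x = x for all x ∈ B₁} ≠ {g ∈ G : g x = x for all x ∈ B₂}. In particular, the pointwise stabilizer map is injective on closed subsets of X_d. -/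
open Set MeasureTheory TopologicalSpace

noncomputable section

namespace Stmt4Aux

variable {d : ℕ}

lemma mem_cyl_dist {x y : XX d} {n : ℕ} :
    y ∈ PiNat.cylinder x n ↔ dist y x ≤ (1 / 2) ^ n :=
  PiNat.mem_cylinder_iff_dist_le

/-- `Cyl` of the length-`n` prefix of `x` is `PiNat.cylinder x n`. -/
lemma cyl_ofFn (x : XX d) (n : ℕ) :
    Cyl (List.ofFn fun i : Fin n => x i) = PiNat.cylinder x n := by
  ext z
  constructor
  · intro h i hi
    have := h ⟨i, by simpa using hi⟩
    simpa using this
  · intro h i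
    have hi : (i : ℕ) < n := by simpa using i.2
    have := h i hi
    simp [List.get_ofFn, this]

/-- Isometries transfer cylinder membership. -/
lemma cyl_transfer (g : XX d ≃ᵢ XX d) {z c : XX d} {k : ℕ} :
    z ∈ PiNat.cylinder c k ↔ g z ∈ PiNat.cylinder (g c) k := by
  rw [mem_cyl_dist, mem_cyl_dist, g.isometry.dist_eq]

/-- Key lemma: for a weakly branch group, any point can be moved by an element
supported in any given cylinder around it. -/
lemma exists_moving (G : Subgroup (XX d ≃ᵢ XX d)) (hG : WeaklyBranch G)
    (x : XX d) (n : ℕ) :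
    ∃ g : XX d ≃ᵢ XX d, g ∈ G ∧ (∀ z : XX d, g z ≠ z → z ∈ PiNat.cylinder x n) ∧
      g x ≠ x := by
  obtain ⟨h, ⟨hhG, hhsupp⟩, hh1⟩ := hG.2 (List.ofFn fun i : Fin n => x i)
  rw [cyl_ofFn] at hhsupp  -- may need: hhsupp : ∀ z, h z ≠ z → z ∈ cylinder x n
  by_cases hx : h x = x
  · -- h fixes x; conjugate
    have : ∃ y : XX d, h y ≠ y := by
      by_contra hcon
      push_neg at hcon
      exact hh1 (IsometryEquiv.ext hcon)
    obtain ⟨y, hy⟩ := this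
    have hdist : (0 : ℝ) < dist (h y) y := dist_pos.2 hy
    obtain ⟨m₀, hm₀⟩ : ∃ m₀ : ℕ, (1 / 2 : ℝ) ^ m₀ < dist (h y) y :=
      exists_pow_lt_of_lt_one hdist one_half_lt_one
    set m := max m₀ n with hm
    have hmlt : (1 / 2 : ℝ) ^ m ≤ (1 / 2 : ℝ) ^ m₀ :=
      pow_le_pow_of_le_one (by norm_num) (by norm_num) (le_max_left _ _)
    have hmlt' : (1 / 2 : ℝ) ^ m < dist (h y) y := lt_of_le_of_lt hmlt hm₀
    obtain ⟨t, htG, htim⟩ := hG.1 (List.ofFn fun i : Fin m => x i)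
      (List.ofFn fun i : Fin m => y i) (by simp)
    rw [cyl_ofFn, cyl_ofFn] at htim
    have htx : t x ∈ PiNat.cylinder y m := by
      rw [← htim]; exact ⟨x, PiNat.self_mem_cylinder x m, rfl⟩
    refine ⟨t⁻¹ * h * t, by exact mul_mem (mul_mem (inv_mem htG) hhG) htG, ?_, ?_⟩
    · intro z hz
      have hz' : h (t z) ≠ t z := by
        intro heq
        apply hz
        show t⁻¹ (h (t z)) = z
        rw [heq]; exact t.symm_apply_apply z
      have h1 : t z ∈ PiNat.cylinder x n := hhsupp (t z) hz'
      have h2 : t x ∈ PiNat.cylinder x n := by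
        have hyxn : y ∈ PiNat.cylinder x n := hhsupp y hy
        intro i hi
        have e1 : t x i = y i := htx i (lt_of_lt_of_le hi (le_max_right _ _))
        have e2 : y i = x i := hyxn i hi
        rw [e1, e2]
      -- t z and t x agree up to n, so (transfer by t⁻¹) z and x agree up to n
      have h3 : t z ∈ PiNat.cylinder (t x) n := by
        intro i hi
        rw [h1 i hi, (h2 i hi).symm]
      exact (cyl_transfer t (z := z) (c := x) (k := n)).mpr h3
    · intro heq
      have heq' : h (t x) = t x := by
        have : t (t⁻¹ (h (t x))) = t x := congrArg t heq
        rwa [IsometryEquiv.apply_inv_self] at this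
      -- t x ∈ cylinder y m, h(t x) = t x, so h y close to y: contradiction
      have c1 : h (t x) ∈ PiNat.cylinder (h y) m := (cyl_transfer h).1 htx
      have c2 : dist (h (t x)) (h y) ≤ (1 / 2) ^ m := mem_cyl_dist.1 c1
      have c3 : dist (t x) y ≤ (1 / 2) ^ m := mem_cyl_dist.1 htx
      have : dist (h y) y ≤ (1 / 2) ^ m := by
        calc dist (h y) y ≤ max (dist (h y) (t x)) (dist (t x) y) := by
              have := PiNat.dist_triangle_nonarch (h y) (t x) y
              exact this
          _ ≤ (1 / 2) ^ m := by
              rw [heq'] at c2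
              apply max_le _ c3
              rw [dist_comm]
              exact c2
      exact absurd (lt_of_lt_of_le hmlt' this) (lt_irrefl _)
  · exact ⟨h, hhG, hhsupp, hx⟩

/-- If `x ∈ B₁ \ B₂` with `B₂` closed, stabilizers differ. -/
lemma key (G : Subgroup (XX d ≃ᵢ XX d)) (hG : WeaklyBranch G)
    (B₁ B₂ : Set (XX d)) (h₂ : IsClosed B₂) {x : XX d} (hx1 : x ∈ B₁) (hx2 : x ∉ B₂) :
    {g : XX d ≃ᵢ XX d | g ∈ G ∧ ∀ x ∈ B₁, g x = x} ≠
      {g : XX d ≃ᵢ XX d | g ∈ G ∧ ∀ x ∈ B₂, g x = x} := by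
  -- find n with cylinder x n disjoint from B₂
  have hopen : IsOpen B₂ᶜ := h₂.isOpen_compl
  rw [Metric.isOpen_iff] at hopen
  obtain ⟨ε, hε, hball⟩ := hopen x hx2
  obtain ⟨n, hn⟩ : ∃ n : ℕ, (1 / 2 : ℝ) ^ n < ε := exists_pow_lt_of_lt_one hε one_half_lt_one
  have hdisj : ∀ z ∈ PiNat.cylinder x n, z ∉ B₂ := by
    intro z hz
    apply hball
    rw [Metric.mem_ball]
    calc dist z x ≤ (1 / 2) ^ n := mem_cyl_dist.1 hz
      _ < ε := hn
  obtain ⟨g, hgG, hgsupp, hgx⟩ := exists_moving G hG x n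
  intro heq
  have hg2 : g ∈ {g : XX d ≃ᵢ XX d | g ∈ G ∧ ∀ x ∈ B₂, g x = x} := by
    refine ⟨hgG, fun z hz => ?_⟩
    by_contra hne
    exact hdisj z (hgsupp z hne) hz
  rw [← heq] at hg2
  exact hgx (hg2.2 x hx1)

end Stmt4Aux

/-- for a weakly branch group `G` of bijective isometries of the boundary of the
`d`-regular tree, distinct closed subsets have distinct pointwise stabilizers in `G`. -/
theorem stmt_4 (d : ℕ) (hd : 2 ≤ d) (G : Subgroup (XX d ≃ᵢ XX d)) (hG : WeaklyBranch G)
    (B₁ B₂ : Set (XX d)) (h₁ : IsClosed B₁) (h₂ : IsClosed B₂) (hne : B₁ ≠ B₂) :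
    {g : XX d ≃ᵢ XX d | g ∈ G ∧ ∀ x ∈ B₁, g x = x} ≠
      {g : XX d ≃ᵢ XX d | g ∈ G ∧ ∀ x ∈ B₂, g x = x} := by
  have : (∃ x, x ∈ B₁ ∧ x ∉ B₂) ∨ (∃ x, x ∈ B₂ ∧ x ∉ B₁) := by
    by_contra hcon
    push_neg at hcon
    exact hne (Set.Subset.antisymm hcon.1 hcon.2)
  rcases this with ⟨x, hx1, hx2⟩ | ⟨x, hx1, hx2⟩
  · exact Stmt4Aux.key G hG B₁ B₂ h₂ hx1 hx2
  · exact (Stmt4Aux.key G hG B₂ B₁ h₁ hx1 hx2).symm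
end
end

section
/- Let d ≥ 2 and let G be a branch group of bijective isometries of X_d = ℕ → Fin d. Let B ⊆ X_d be a closed set with empty interior and let g ∈ G. If the setwise stabilizers coincide, i.e. {h ∈ G : h(B) = B} = {h ∈ G : h(g(B)) = g(B)}, then g(B) = B. -/
open Set MeasureTheory TopologicalSpace

noncomputable section

namespace Stmt5Aux

variable {d : ℕ}

/-- Isometries map cylinders to cylinders. -/
lemma isom_cyl (f : XX d ≃ᵢ XX d) {x y : XX d} {n : ℕ} (h : y ∈ PiNat.cylinder x n) :
    f y ∈ PiNat.cylinder (f x) n := by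
  rw [PiNat.mem_cylinder_iff_dist_le] at h ⊢
  rwa [f.dist_eq]

lemma cyl_trans {x y z : XX d} {n : ℕ} (h1 : y ∈ PiNat.cylinder x n)
    (h2 : z ∈ PiNat.cylinder y n) : z ∈ PiNat.cylinder x n := by
  rw [PiNat.mem_cylinder_iff] at *
  exact fun i hi => (h2 i hi).trans (h1 i hi)

lemma cyl_symm {x y : XX d} {n : ℕ} (h1 : y ∈ PiNat.cylinder x n) :
    x ∈ PiNat.cylinder y n := (PiNat.mem_cylinder_comm x y n).1 h1

/-- Two points of a level-`n` cylinder `Cyl w` are in the same `PiNat.cylinder` of level `n`. -/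
lemma mem_cylinder_of_mem_Cyl {w : List (Fin d)} {x y : XX d} (hx : x ∈ Cyl w) (hy : y ∈ Cyl w) :
    y ∈ PiNat.cylinder x w.length := by
  rw [PiNat.mem_cylinder_iff]
  intro i hi
  exact (hy ⟨i, hi⟩).trans (hx ⟨i, hi⟩).symm

lemma mem_Cyl_of_cylinder {w : List (Fin d)} {x y : XX d} (hx : x ∈ Cyl w)
    (hy : y ∈ PiNat.cylinder x w.length) : y ∈ Cyl w := by
  rw [PiNat.mem_cylinder_iff] at hy
  intro i
  exact (hy i.1 i.2).trans (hx i)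

/-- If `e` is supported in `S` then it maps points into `S ∪ fixed`. -/
lemma move_mem {e : XX d ≃ᵢ XX d} {S : Set (XX d)} (hs : ∀ z, e z ≠ z → z ∈ S)
    {z : XX d} (hz : e z ≠ z) : e z ∈ S := by
  by_contra h
  have : e (e z) = e z := by
    by_contra h2
    exact h (hs _ h2)
  exact hz (e.injective this)

lemma supp_inv {e : XX d ≃ᵢ XX d} {S : Set (XX d)} (hs : ∀ z, e z ≠ z → z ∈ S)
    {z : XX d} (hz : e⁻¹ z ≠ z) : z ∈ S := by
  have hzz : e (e⁻¹ z) = z := e.apply_symm_apply z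
  have h1 : e (e⁻¹ z) ≠ e⁻¹ z := by
    rw [hzz]
    exact fun h => hz h.symm
  have := move_mem hs h1
  rwa [hzz] at this

variable {G : Subgroup (XX d ≃ᵢ XX d)}

lemma ristLevel_le : ∀ {n : ℕ}, ristLevel G n ≤ G := by
  intro n
  apply Subgroup.closure_le G |>.2
  rintro f hf
  simp only [Set.mem_iUnion] at hf
  obtain ⟨w, -, hw⟩ := hf
  exact hw.1

/-- Key structural lemma about `ristLevel G n`: every element preserves each level-`n`
cylinder, and agrees on any given level-`n` cylinder with an element of `G` supported there. -/
lemma ristLevel_struct (n : ℕ) (x₀ : XX d) {h : XX d ≃ᵢ XX d} (hh : h ∈ ristLevel G n) :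
    (∀ z, h z ∈ PiNat.cylinder z n) ∧
    ∃ r : XX d ≃ᵢ XX d, r ∈ G ∧ (∀ z, r z ≠ z → z ∈ PiNat.cylinder x₀ n) ∧
      (∀ z ∈ PiNat.cylinder x₀ n, r z = h z) := by
  induction hh using Subgroup.closure_induction with
  | mem f hf =>
    simp only [Set.mem_iUnion] at hf
    obtain ⟨w, hwlen, hfw⟩ := hf
    have hwlen : w.length = n := hwlen
    have hcyl : ∀ z, f z ∈ PiNat.cylinder z n := by
      intro z
      rcases eq_or_ne (f z) z with he | he
      · rw [he]; exact PiNat.self_mem_cylinder z n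
      · have h1 : z ∈ Cyl w := hfw.2 z he
        have h2 : f z ∈ Cyl w := move_mem hfw.2 he
        have := mem_cylinder_of_mem_Cyl h1 h2
        rwa [hwlen] at this
    refine ⟨hcyl, ?_⟩
    by_cases hx : x₀ ∈ Cyl w
    · refine ⟨f, hfw.1, fun z hz => ?_, fun z _ => rfl⟩
      have := mem_cylinder_of_mem_Cyl hx (hfw.2 z hz)
      rwa [hwlen] at this
    · refine ⟨1, one_mem G, by simp, fun z hz => ?_⟩
      by_contra hne
      have hne' : f z ≠ z := fun h => hne (by simp [h])
      apply hx
      apply mem_Cyl_of_cylinder (hfw.2 z hne')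
      rw [hwlen]
      exact cyl_symm hz
  | one => exact ⟨fun z => by simp [PiNat.self_mem_cylinder],
      1, one_mem G, by simp, by simp⟩
  | mul f₁ f₂ hf₁ hf₂ ih₁ ih₂ =>
    obtain ⟨hc₁, r₁, hr₁G, hr₁s, hr₁e⟩ := ih₁
    obtain ⟨hc₂, r₂, hr₂G, hr₂s, hr₂e⟩ := ih₂
    have hc : ∀ z, (f₁ * f₂) z ∈ PiNat.cylinder z n := by
      intro z
      exact cyl_trans (hc₂ z) (hc₁ (f₂ z))
    refine ⟨hc, r₁ * r₂, mul_mem hr₁G hr₂G, fun z hz => ?_, fun z hz => ?_⟩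
    · rcases eq_or_ne (r₂ z) z with he | he
      · apply hr₁s
        have : (r₁ * r₂) z = r₁ (r₂ z) := rfl
        rw [this, he] at hz
        exact hz
      · exact hr₂s z he
    · have h2 : f₂ z ∈ PiNat.cylinder x₀ n := cyl_trans hz (hc₂ z)
      show r₁ (r₂ z) = f₁ (f₂ z)
      rw [hr₂e z hz, hr₁e _ h2]
  | inv f hf ih =>
    obtain ⟨hc, r, hrG, hrs, hre⟩ := ih
    have hcinv : ∀ z, f⁻¹ z ∈ PiNat.cylinder z n := by
      intro z
      have := hc (f⁻¹ z)
      rw [show f (f⁻¹ z) = z from f.apply_symm_apply z] at this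
      exact cyl_symm this
    refine ⟨hcinv, r⁻¹, inv_mem hrG, fun z hz => supp_inv hrs hz, fun z hz => ?_⟩
    have hu : f⁻¹ z ∈ PiNat.cylinder x₀ n := cyl_trans hz (hcinv z)
    have : r (f⁻¹ z) = f (f⁻¹ z) := hre _ hu
    rw [show f (f⁻¹ z) = z from f.apply_symm_apply z] at this
    calc r⁻¹ z = r⁻¹ (r (f⁻¹ z)) := by rw [this]
    _ = f⁻¹ z := r.symm_apply_apply _

end Stmt5Aux

namespace Stmt5Aux
variable {d : ℕ} {G : Subgroup (XX d ≃ᵢ XX d)}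

/-- `ristLevel G n` is normalized by elements of `G`. -/
lemma ristLevel_conj (n : ℕ) (hd : 2 ≤ d) {f h : XX d ≃ᵢ XX d} (hf : f ∈ G)
    (hh : h ∈ ristLevel G n) : f * h * f⁻¹ ∈ ristLevel G n := by
  induction hh using Subgroup.closure_induction with
  | mem f₀ hf₀ =>
    simp only [Set.mem_iUnion] at hf₀
    obtain ⟨w, hwlen, hfw⟩ := hf₀
    have hwlen : w.length = n := hwlen
    have hd0 : 0 < d := by omega
    set z₀ : XX d := fun i => if hi : i < w.length then w.get ⟨i, hi⟩ else ⟨0, hd0⟩ with hz₀def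
    have hz₀ : z₀ ∈ Cyl w := by
      intro i
      simp only [hz₀def]
      rw [dif_pos i.2]
    set w' : List (Fin d) := List.ofFn (fun i : Fin n => f z₀ i.1) with hw'def
    have hw'len : w'.length = n := by simp [hw'def]
    have hmem : f * f₀ * f⁻¹ ∈ rist G w' := by
      constructor
      · exact mul_mem (mul_mem hf hfw.1) (inv_mem hf)
      · intro y hy
        have hne : f₀ (f⁻¹ y) ≠ f⁻¹ y := by
          intro he
          apply hy
          show f (f₀ (f⁻¹ y)) = y
          rw [he]
          exact f.apply_symm_apply y
        have h1 : f⁻¹ y ∈ Cyl w := hfw.2 _ hne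
        have h2 : f⁻¹ y ∈ PiNat.cylinder z₀ n := by
          have := mem_cylinder_of_mem_Cyl hz₀ h1
          rwa [hwlen] at this
        have h3 : y ∈ PiNat.cylinder (f z₀) n := by
          have := isom_cyl f h2
          rwa [show f (f⁻¹ y) = y from f.apply_symm_apply y] at this
        intro i
        have hi : i.1 < n := by rw [← hw'len]; exact i.2
        have := (PiNat.mem_cylinder_iff.1 h3) i.1 hi
        rw [this]
        simp [hw'def, List.get_ofFn]
    apply Subgroup.subset_closure
    simp only [Set.mem_iUnion]
    exact ⟨w', hw'len, hmem⟩
  | one => simpa using one_mem _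
  | mul a b _ _ iha ihb =>
    have : f * (a * b) * f⁻¹ = (f * a * f⁻¹) * (f * b * f⁻¹) := by group
    rw [this]
    exact mul_mem iha ihb
  | inv a _ iha =>
    have : f * a⁻¹ * f⁻¹ = (f * a * f⁻¹)⁻¹ := by group
    rw [this]
    exact inv_mem iha

/-- Level transitivity: some element of `G` maps the `m`-cylinder of `x` to that of `y`. -/
lemma exists_map (hLT : LevelTransitive G) (x y : XX d) (m : ℕ) :
    ∃ f, f ∈ G ∧ f x ∈ PiNat.cylinder y m := by
  obtain ⟨f, hfG, hf⟩ := hLT (List.ofFn fun i : Fin m => x i.1)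
    (List.ofFn fun i : Fin m => y i.1) (by simp)
  have hx : x ∈ Cyl (List.ofFn fun i : Fin m => x i.1) := by
    intro i
    simp [List.get_ofFn]
  have hfx : f x ∈ Cyl (List.ofFn fun i : Fin m => y i.1) := hf ▸ Set.mem_image_of_mem f hx
  refine ⟨f, hfG, ?_⟩
  rw [PiNat.mem_cylinder_iff]
  intro i hi
  have := hfx ⟨i, by simpa using hi⟩
  simpa [List.get_ofFn] using this

end Stmt5Aux

namespace Stmt5Aux
variable {d : ℕ} {G : Subgroup (XX d ≃ᵢ XX d)}

lemma core (hd : 2 ≤ d) (hLT : LevelTransitive G)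
    (hidx : ∀ n : ℕ, (ristLevel G n).index ≠ 0)
    (B₁ B₂ : Set (XX d)) (h1c : IsClosed B₁) (h2c : IsClosed B₂)
    (h2i : interior B₂ = ∅)
    (himp : ∀ r : XX d ≃ᵢ XX d, r ∈ G → r '' B₁ = B₁ → r '' B₂ = B₂)
    (x : XX d) (hx2 : x ∈ B₂) (hx1 : x ∉ B₁) : False := by
  -- a cylinder around x disjoint from B₁
  have hopen := h1c.isOpen_compl
  rw [Metric.isOpen_iff] at hopen
  obtain ⟨ε, hε, hball⟩ := hopen x hx1
  obtain ⟨n, hn⟩ := exists_pow_lt_of_lt_one hε (by norm_num : (1/2 : ℝ) < 1)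
  have hcylB₁ : ∀ y ∈ PiNat.cylinder x n, y ∉ B₁ := by
    intro y hy hyB
    have hdist : dist y x ≤ (1/2 : ℝ)^n := PiNat.mem_cylinder_iff_dist_le.1 hy
    exact hball (Metric.mem_ball.2 (lt_of_le_of_lt hdist hn)) hyB
  set K := ristLevel G n with hKdef
  have hfin : Finite ((XX d ≃ᵢ XX d) ⧸ K) := by
    have h0 := hidx n
    rw [← hKdef] at h0
    exact (Nat.card_ne_zero.1 h0).2
  -- the decreasing sequence of coset sets
  set S : ℕ → Set ((XX d ≃ᵢ XX d) ⧸ K) := fun m =>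
    {q | ∃ f, f ∈ G ∧ f x ∈ PiNat.cylinder x m ∧ QuotientGroup.mk f = q} with hSdef
  have hanti : ∀ m m' : ℕ, m ≤ m' → S m' ⊆ S m := by
    rintro m m' h q ⟨f, hf, hc, rfl⟩
    exact ⟨f, hf, PiNat.cylinder_anti x h hc, rfl⟩
  obtain ⟨m₀, hm₀⟩ : ∃ m₀, (S m₀).ncard = sInf (Set.range fun m => (S m).ncard) :=
    Nat.sInf_mem (Set.range_nonempty _)
  have hstabS : ∀ m, m₀ ≤ m → S m = S m₀ := by
    intro m hm
    refine Set.eq_of_subset_of_ncard_le (hanti _ _ hm) ?_ (Set.toFinite _)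
    rw [hm₀]
    exact Nat.sInf_le ⟨m, rfl⟩
  set N := max m₀ n with hNdef
  have hstab : ∀ m, N ≤ m → S m = S N := by
    intro m hm
    rw [hstabS m (le_trans (le_max_left m₀ n) hm), hstabS N (le_max_left m₀ n)]
  -- the cylinder of level N around x is contained in B₂
  have hsub : PiNat.cylinder x N ⊆ B₂ := by
    intro y hy
    rw [← h2c.closure_eq]
    rw [Metric.mem_closure_iff]
    intro ε' hε'
    obtain ⟨m', hm'⟩ := exists_pow_lt_of_lt_one hε' (by norm_num : (1/2 : ℝ) < 1)
    set m := max m' N with hmdef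
    have hmN : N ≤ m := le_max_right m' N
    have hεm : (1/2 : ℝ)^m < ε' := by
      refine lt_of_le_of_lt ?_ hm'
      exact pow_le_pow_of_le_one (by norm_num) (by norm_num) (le_max_left m' N)
    obtain ⟨f, hfG, hfx⟩ := exists_map hLT x y m
    have h1 : f x ∈ PiNat.cylinder x N :=
      cyl_trans hy (PiNat.cylinder_anti y hmN hfx)
    have hfS : QuotientGroup.mk f ∈ S N := ⟨f, hfG, h1, rfl⟩
    rw [← hstab m hmN] at hfS
    obtain ⟨f', hf'G, hf'x, hq⟩ := hfS
    have hK : f'⁻¹ * f ∈ K := (QuotientGroup.eq (s := K)).1 hq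
    have hKh : f * f'⁻¹ ∈ K := by
      have heq : f * f'⁻¹ = f' * (f'⁻¹ * f) * f'⁻¹ := by group
      rw [heq, hKdef]
      exact ristLevel_conj n hd hf'G hK
    have hinv : f'⁻¹ x ∈ PiNat.cylinder x m := by
      have h2 := isom_cyl f'⁻¹ hf'x
      rw [show f'⁻¹ (f' x) = x from f'.symm_apply_apply x] at h2
      exact cyl_symm h2
    have hhx : (f * f'⁻¹) x ∈ PiNat.cylinder y m := by
      have h2 := isom_cyl f hinv
      exact cyl_trans hfx h2
    obtain ⟨-, r, hrG, hrs, hre⟩ := ristLevel_struct n x hKh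
    have hrB₁ : r '' B₁ = B₁ := by
      have hfix : ∀ b ∈ B₁, r b = b := by
        intro b hb
        by_contra hne
        exact hcylB₁ b (hrs b hne) hb
      ext z
      constructor
      · rintro ⟨b, hb, rfl⟩
        rw [hfix b hb]
        exact hb
      · intro hz
        exact ⟨z, hz, hfix z hz⟩
    have hrx : r x ∈ B₂ := (himp r hrG hrB₁) ▸ Set.mem_image_of_mem r hx2
    refine ⟨r x, hrx, ?_⟩
    have hrxe : r x = (f * f'⁻¹) x := hre x (PiNat.self_mem_cylinder x n)
    rw [hrxe]
    have hd2 : dist ((f * f'⁻¹) x) y ≤ (1/2 : ℝ)^m := PiNat.mem_cylinder_iff_dist_le.1 hhx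
    rw [dist_comm]
    exact lt_of_le_of_lt hd2 hεm
  -- contradiction with empty interior
  have hxint : x ∈ interior B₂ := by
    rw [mem_interior]
    refine ⟨Metric.ball x ((1/2 : ℝ)^N), ?_, Metric.isOpen_ball,
      Metric.mem_ball_self (by positivity)⟩
    intro z hz
    apply hsub
    rw [PiNat.mem_cylinder_iff_dist_le]
    exact le_of_lt (Metric.mem_ball.1 hz)
  rw [h2i] at hxint
  exact hxint

end Stmt5Aux

/-- for a branch group `G`, a closed set `B` with empty interior and `g ∈ G`:
if the setwise stabilizers of `B` and of `g(B)` in `G` coincide, then `g(B) = B`. -/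
theorem stmt_5 (d : ℕ) (hd : 2 ≤ d) (G : Subgroup (XX d ≃ᵢ XX d)) (hG : Branch G)
    (B : Set (XX d)) (hB : IsClosed B) (hint : interior B = ∅)
    (g : XX d ≃ᵢ XX d) (hg : g ∈ G)
    (hstab : {h : XX d ≃ᵢ XX d | h ∈ G ∧ h '' B = B} =
      {h : XX d ≃ᵢ XX d | h ∈ G ∧ h '' (g '' B) = g '' B}) :
    g '' B = B := by
  by_contra hne
  have hLT := hG.1.1
  have hidx := hG.2
  have hgBc : IsClosed (g '' B) := g.toHomeomorph.isClosedMap B hB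
  have hgBi : interior (g '' B) = ∅ := by
    have h1 := g.toHomeomorph.image_interior B
    rw [hint] at h1
    simpa using h1.symm
  have hcases : ¬(g '' B ⊆ B) ∨ ¬(B ⊆ g '' B) := by
    by_contra h
    push_neg at h
    exact hne (h.1.antisymm h.2)
  rcases hcases with h | h
  · obtain ⟨x, hx2, hx1⟩ := Set.not_subset.1 h
    refine Stmt5Aux.core hd hLT hidx B (g '' B) hB hgBc hgBi ?_ x hx2 hx1
    intro r hrG hrB
    have hrmem : r ∈ {h : XX d ≃ᵢ XX d | h ∈ G ∧ h '' B = B} := ⟨hrG, hrB⟩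
    rw [hstab] at hrmem
    exact hrmem.2
  · obtain ⟨x, hx2, hx1⟩ := Set.not_subset.1 h
    refine Stmt5Aux.core hd hLT hidx (g '' B) B hgBc hB hint ?_ x hx2 hx1
    intro r hrG hrB
    have hrmem : r ∈ {h : XX d ≃ᵢ XX d | h ∈ G ∧ h '' (g '' B) = g '' B} := ⟨hrG, hrB⟩
    rw [← hstab] at hrmem
    exact hrmem.2
end
end

section
/- Let d ≥ 2, let G be a branch group of bijective isometries of X_d = ℕ → Fin d, let v be a finite word over Fin d, and let C ⊆ X_d be a closed set such that C ∩ Cyl(v) is not an open subset of X_d. Then the orbit of C under the rigid stabilizer rist_G(v), i.e. the set {h(C) : h ∈ rist_G(v)}, is infinite. -/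
open Set MeasureTheory TopologicalSpace

noncomputable section

namespace Stmt6Aux

variable {d : ℕ}

open Classical in
/-- The tree automorphism swapping `x`-ish and `y`-ish branches below level `N`. -/
noncomputable def mv (x y : XX d) (N : ℕ) (z : XX d) : XX d := fun n =>
  if N ≤ n ∧ ∀ i < n, z i = x i ∨ z i = y i then Equiv.swap (x n) (y n) (z n) else z n

lemma mv_fix {x y z : XX d} {N n : ℕ} (h : ¬(z n = x n ∨ z n = y n)) :
    mv x y N z n = z n := by
  push_neg at h
  unfold mv
  split
  · exact Equiv.swap_apply_of_ne_of_ne h.1 h.2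
  · rfl

lemma mv_mem {x y z : XX d} {N n : ℕ} :
    (z n = x n ∨ z n = y n) ↔ (mv x y N z n = x n ∨ mv x y N z n = y n) := by
  constructor
  · intro h
    unfold mv
    split
    · rcases h with h | h <;> rw [h]
      · rw [Equiv.swap_apply_left]; exact Or.inr rfl
      · rw [Equiv.swap_apply_right]; exact Or.inl rfl
    · exact h
  · intro h
    by_contra hc
    rw [mv_fix hc] at h
    exact hc h

lemma mv_cond_iff {x y z : XX d} {N n : ℕ} :
    (N ≤ n ∧ ∀ i < n, z i = x i ∨ z i = y i) ↔
      (N ≤ n ∧ ∀ i < n, mv x y N z i = x i ∨ mv x y N z i = y i) := by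
  refine and_congr Iff.rfl (forall_congr' fun i => imp_congr Iff.rfl mv_mem)

lemma mv_invol (x y : XX d) (N : ℕ) : Function.Involutive (mv x y N) := by
  intro z
  funext n
  by_cases h : N ≤ n ∧ ∀ i < n, z i = x i ∨ z i = y i
  · have h' := mv_cond_iff.mp h
    conv_lhs => rw [mv, if_pos h']
    rw [mv, if_pos h]
    exact Equiv.swap_apply_self _ _ _
  · have h' : ¬(N ≤ n ∧ ∀ i < n, mv x y N z i = x i ∨ mv x y N z i = y i) :=
      fun hc => h (mv_cond_iff.mpr hc)
    conv_lhs => rw [mv, if_neg h']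
    rw [mv, if_neg h]

lemma mv_congr {x y z z' : XX d} {N n : ℕ} (h : ∀ i ≤ n, z i = z' i) :
    mv x y N z n = mv x y N z' n := by
  have hc : (N ≤ n ∧ ∀ i < n, z i = x i ∨ z i = y i) ↔
      (N ≤ n ∧ ∀ i < n, z' i = x i ∨ z' i = y i) := by
    constructor <;> rintro ⟨h1, h2⟩ <;> refine ⟨h1, fun i hi => ?_⟩
    · rw [← h i hi.le]; exact h2 i hi
    · rw [h i hi.le]; exact h2 i hi
  unfold mv
  rw [h n le_rfl, if_congr hc rfl rfl]

lemma mv_cylinder {x y z z' : XX d} {N n : ℕ} (h : z' ∈ PiNat.cylinder z n) :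
    mv x y N z' ∈ PiNat.cylinder (mv x y N z) n := by
  rw [PiNat.mem_cylinder_iff] at h ⊢
  intro i hi
  exact mv_congr (fun j hj => h j (lt_of_le_of_lt hj hi))

lemma mv_isometry (x y : XX d) (N : ℕ) :
    ∀ a b : XX d, dist (mv x y N a) (mv x y N b) = dist a b := by
  have hle : ∀ a b : XX d, dist (mv x y N a) (mv x y N b) ≤ dist a b := by
    intro a b
    rcases eq_or_ne a b with rfl | hab
    · simp
    · have hmv : mv x y N a ≠ mv x y N b := fun hc => hab ((mv_invol x y N).injective hc)
      have h1 : dist a b = (1 / 2 : ℝ) ^ PiNat.firstDiff a b := PiNat.dist_eq_of_ne hab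
      have h2 : a ∈ PiNat.cylinder b (PiNat.firstDiff a b) := PiNat.mem_cylinder_firstDiff a b
      have h3 := mv_cylinder (x := x) (y := y) (N := N) h2
      have h4 : dist (mv x y N a) (mv x y N b) ≤ (1 / 2 : ℝ) ^ PiNat.firstDiff a b :=
        PiNat.mem_cylinder_iff_dist_le.mp h3
      rw [h1]; exact h4
  intro a b
  refine le_antisymm (hle a b) ?_
  have := hle (mv x y N a) (mv x y N b)
  rwa [mv_invol, mv_invol] at this

/-- `mv` as an isometric self-equivalence. -/
noncomputable def mvI (x y : XX d) (N : ℕ) : XX d ≃ᵢ XX d :=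
  ⟨(mv_invol x y N).toPerm, Isometry.of_dist_eq (mv_isometry x y N)⟩

@[simp] lemma mvI_apply (x y : XX d) (N : ℕ) (z : XX d) : mvI x y N z = mv x y N z := rfl

@[simp] lemma mvI_inv_apply (x y : XX d) (N : ℕ) (z : XX d) :
    (mvI x y N)⁻¹ z = mv x y N z := rfl

lemma mv_maps (x y : XX d) (N : ℕ) (h : ∀ i < N, y i = x i) : mv x y N x = y := by
  funext n
  rcases lt_or_ge n N with hn | hn
  · rw [mv, if_neg (by omega : ¬(N ≤ n ∧ ∀ i < n, x i = x i ∨ x i = y i))]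
    exact (h n hn).symm
  · rw [mv, if_pos ⟨hn, fun i _ => Or.inl rfl⟩, Equiv.swap_apply_left]

lemma mv_support (x y z : XX d) (N : ℕ) (h : ∀ i < N, y i = x i)
    (hz : ¬ z ∈ PiNat.cylinder x N) : mv x y N z = z := by
  rw [PiNat.mem_cylinder_iff] at hz
  push_neg at hz
  obtain ⟨j, hjN, hj⟩ := hz
  funext n
  have hxj : z j ≠ x j := hj
  have hyj : z j ≠ y j := by rw [h j hjN]; exact hj
  rw [mv, if_neg]
  rintro ⟨hn, hall⟩
  rcases hall j (lt_of_lt_of_le hjN hn) with hc | hc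
  · exact hxj hc
  · exact hyj hc

end Stmt6Aux

/-- for a branch group `G`, a vertex `v` and a closed set `C ⊆ X_d` such that
`C ∩ Cyl v` is not open, the orbit `{h(C) : h ∈ rist_G(v)}` is infinite. -/
theorem stmt_6 (d : ℕ) (hd : 2 ≤ d) (G : Subgroup (XX d ≃ᵢ XX d)) (hG : Branch G)
    (v : List (Fin d)) (C : Set (XX d)) (hC : IsClosed C)
    (hno : ¬ IsOpen (C ∩ Cyl v)) :
    {S : Set (XX d) | ∃ h ∈ rist G v, S = (h : XX d ≃ᵢ XX d) '' C}.Infinite := by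
  classical
  set L := v.length with hL
  -- the rigid level stabilizer at level 0 is a finite-index subgroup of the
  -- full isometry group, contained in G
  set H : Subgroup (XX d ≃ᵢ XX d) := ristLevel G 0 with hH
  have hHG : H ≤ G := by
    rw [hH, ristLevel]
    refine (Subgroup.closure_le G).mpr ?_
    rintro g hg
    simp only [Set.mem_iUnion] at hg
    obtain ⟨w, -, hgG, -⟩ := hg
    exact hgG
  have hfin : Finite ((XX d ≃ᵢ XX d) ⧸ H) := by
    have h0 := hG.2 0
    exact Nat.finite_of_card_ne_zero h0
  -- extract a "boundary" point x of C ∩ Cyl v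
  rw [isOpen_iff_mem_nhds] at hno
  push_neg at hno
  obtain ⟨x, ⟨hxC, hxv⟩, hxn⟩ := hno
  -- for every N ≥ L there is a point close to x, inside Cyl v, but not in C
  have hy : ∀ N : ℕ, ∃ y : XX d, (∀ i < L + N, y i = x i) ∧ y ∉ C := by
    intro N
    by_contra hcon
    push_neg at hcon
    apply hxn
    have hopen : IsOpen (PiNat.cylinder x (L + N)) := PiNat.isOpen_cylinder (E := fun _ => Fin d) x (L + N)
    refine Filter.mem_of_superset (hopen.mem_nhds (PiNat.self_mem_cylinder x (L + N))) ?_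
    intro z hz
    rw [PiNat.mem_cylinder_iff] at hz
    refine ⟨hcon z (fun i hi => hz i hi), ?_⟩
    intro i
    have : z i.1 = x i.1 := hz i.1 (by omega)
    rw [this]
    exact hxv i
  choose Y hY1 hY2 using hy
  have hYne : ∀ N, Y N ≠ x := fun N h => hY2 N (h ▸ hxC)
  -- firstDiff of Y N and x is at least L + N
  have hYfd : ∀ N, L + N ≤ PiNat.firstDiff (Y N) x := by
    intro N
    rw [← PiNat.mem_cylinder_iff_le_firstDiff (hYne N)]
    exact PiNat.mem_cylinder_iff.mpr (hY1 N)
  -- the moving elements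
  set F : ℕ → (XX d ≃ᵢ XX d) := fun N => Stmt6Aux.mvI x (Y N) (L + N) with hF
  have hFx : ∀ N, F N x = Y N := fun N => Stmt6Aux.mv_maps x (Y N) (L + N) (hY1 N)
  have hFsupp : ∀ N z, z ∉ PiNat.cylinder x (L + N) → F N z = z :=
    fun N z hz => Stmt6Aux.mv_support x (Y N) z (L + N) (hY1 N) hz
  have hFsupp' : ∀ N z, z ∉ PiNat.cylinder x (L + N) → (F N)⁻¹ z = z :=
    fun N z hz => hFsupp N z hz
  -- infinitely many of the F N lie in a single coset of H
  obtain ⟨c, hc⟩ := Finite.exists_infinite_fiber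
    (fun N => (QuotientGroup.mk (F N) : (XX d ≃ᵢ XX d) ⧸ H))
  have hT : Set.Infinite ((fun N => (QuotientGroup.mk (F N) : (XX d ≃ᵢ XX d) ⧸ H)) ⁻¹' {c}) :=
    Set.infinite_coe_iff.mp hc
  set T := (fun N => (QuotientGroup.mk (F N) : (XX d ≃ᵢ XX d) ⧸ H)) ⁻¹' {c} with hTdef
  have hTgt : ∀ b : ℕ, ∃ m ∈ T, b < m := by
    intro b
    by_contra hcon
    push_neg at hcon
    exact hT ((Set.finite_Iic b).subset hcon)
  -- a strictly increasing sequence in T growing past the firstDiffs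
  choose nxt hnxtT hnxtgt using hTgt
  set M : ℕ → ℕ := fun j => Nat.rec (nxt 0) (fun _ m => nxt (PiNat.firstDiff (Y m) x)) j with hM
  have hM0 : M 0 = nxt 0 := rfl
  have hMs : ∀ j, M (j + 1) = nxt (PiNat.firstDiff (Y (M j)) x) := fun j => rfl
  have hMT : ∀ j, M j ∈ T := by
    intro j
    cases j with
    | zero => exact hnxtT 0
    | succ j => rw [hMs j]; exact hnxtT _
  have hMgt : ∀ j, PiNat.firstDiff (Y (M j)) x < M (j + 1) := by
    intro j; rw [hMs j]; exact hnxtgt _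
  have hMmono : StrictMono M := by
    refine strictMono_nat_of_lt_succ ?_
    intro j
    have h1 := hMgt j
    have h2 := hYfd (M j)
    omega
  -- Y (M i) is outside cylinder x (L + M j) for i < j
  have hout : ∀ i j, i < j → Y (M i) ∉ PiNat.cylinder x (L + M j) := by
    intro i j hij hmem
    have h1 : L + M j ≤ PiNat.firstDiff (Y (M i)) x :=
      (PiNat.mem_cylinder_iff_le_firstDiff (hYne (M i)) _).mp hmem
    have h2 : PiNat.firstDiff (Y (M i)) x < M (i + 1) := hMgt i
    have h3 : M (i + 1) ≤ M j := hMmono.monotone hij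
    omega
  -- the group elements h j
  set h : ℕ → (XX d ≃ᵢ XX d) := fun j => (F (M (j + 1)))⁻¹ * F (M j) with hh
  have hhH : ∀ j, h j ∈ H := by
    intro j
    have h1 : (QuotientGroup.mk (F (M (j+1))) : (XX d ≃ᵢ XX d) ⧸ H) = c := hMT (j+1)
    have h2 : (QuotientGroup.mk (F (M j)) : (XX d ≃ᵢ XX d) ⧸ H) = c := hMT j
    have : (QuotientGroup.mk (F (M (j+1))) : (XX d ≃ᵢ XX d) ⧸ H) = QuotientGroup.mk (F (M j)) :=
      h1.trans h2.symm
    exact QuotientGroup.eq.mp this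
  -- support of h j is inside cylinder x (L + M j)
  have hsupp : ∀ j z, z ∉ PiNat.cylinder x (L + M j) → h j z = z := by
    intro j z hz
    have hz' : z ∉ PiNat.cylinder x (L + M (j + 1)) := by
      intro hmem
      have hmm : M j < M (j + 1) := hMmono (Nat.lt_succ_self j)
      exact hz (PiNat.cylinder_anti x (by omega) hmem)
    rw [hh]
    simp only [IsometryEquiv.mul_apply]
    rw [hFsupp (M j) z hz, hFsupp' (M (j+1)) z hz']
  -- h j ∈ rist G v
  have hrist : ∀ j, h j ∈ rist G v := by
    intro j
    refine ⟨hHG (hhH j), ?_⟩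
    intro z hz
    have hmem : z ∈ PiNat.cylinder x (L + M j) := by
      by_contra hcon
      exact hz (hsupp j z hcon)
    rw [PiNat.mem_cylinder_iff] at hmem
    intro i
    have : z i.1 = x i.1 := hmem i.1 (by omega)
    rw [this]
    exact hxv i
  -- h j maps x to Y (M j)
  have hhx : ∀ j, h j x = Y (M j) := by
    intro j
    rw [hh]
    simp only [IsometryEquiv.mul_apply]
    rw [hFx (M j)]
    exact hFsupp' (M (j+1)) _ (hout j (j+1) (Nat.lt_succ_self j))
  -- Y (M i) not in h j '' C for i < j
  have hnotin : ∀ i j, i < j → Y (M i) ∉ (h j : XX d ≃ᵢ XX d) '' C := by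
    intro i j hij hmem
    obtain ⟨w, hwC, hw⟩ := hmem
    have hfix : h j (Y (M i)) = Y (M i) := hsupp j _ (hout i j hij)
    have : w = Y (M i) := by
      have h1 : (h j)⁻¹ (Y (M i)) = Y (M i) := by
        conv_lhs => rw [← hfix]
        exact IsometryEquiv.inv_apply_self _ _
      calc w = (h j)⁻¹ (h j w) := (IsometryEquiv.inv_apply_self _ _).symm
        _ = (h j)⁻¹ (Y (M i)) := by rw [hw]
        _ = Y (M i) := h1
    rw [this] at hwC
    exact hY2 (M i) hwC
  have hin : ∀ i, Y (M i) ∈ (h i : XX d ≃ᵢ XX d) '' C := by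
    intro i
    exact ⟨x, hxC, hhx i⟩
  -- conclude
  refine Set.infinite_of_injective_forall_mem
    (f := fun j => (h j : XX d ≃ᵢ XX d) '' C) ?_ ?_
  · intro i j hij
    simp only at hij
    by_contra hne
    rcases lt_or_gt_of_ne hne with hlt | hlt
    · exact hnotin i j hlt (hij ▸ hin i)
    · exact hnotin j i hlt (hij ▸ hin j)
  · intro j
    exact ⟨h j, hrist j, rfl⟩
end
end

section
/- Let d ≥ 2 and let G be a weakly branch group of bijective isometries of X_d = ℕ → Fin d. Let ν be a Borel probability measure on the space 𝒞* of nonempty compact subsets of X_d (with the Hausdorff metric) that is invariant under the action B ↦ g(B) of G. Let A ⊆ X_d be a clopen set and let Ã ⊇ A be a closed set with μ_d(Ã \ A) = 0, where μ_d is the uniform Bernoulli measure on X_d. Then ν({B ∈ 𝒞* : B ⊆ Ã}) = ν({B ∈ 𝒞* : B ⊆ A}). -/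
open Set MeasureTheory TopologicalSpace

noncomputable section

/-- The Borel σ-algebra on the space of nonempty compact subsets of `X_d`, for its Hausdorff
metric. -/
instance NCms (d : ℕ) : MeasurableSpace (NonemptyCompacts (XX d)) :=
  borel (NonemptyCompacts (XX d))

instance NCborel (d : ℕ) : BorelSpace (NonemptyCompacts (XX d)) := ⟨rfl⟩

/-- The action of a bijective isometry `g` of `X_d` on nonempty compact subsets,
`B ↦ g(B)`. -/
def imageNC {d : ℕ} (g : XX d ≃ᵢ XX d) (B : NonemptyCompacts (XX d)) :
    NonemptyCompacts (XX d) :=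
  ⟨⟨(g : XX d ≃ᵢ XX d) '' (B : Set (XX d)), B.isCompact.image g.continuous⟩,
    B.nonempty.image _⟩

/-!
A clopen set `A` is determined by the first `n₀` letters. If `g(B) ⊆ Ã` but `g(B) ⊄ A`, then `g`
maps one of at most `d ^ n₀` representatives of the level-`n₀` prefixes of `B` into
`C = Ã \ A`, hence into a level-`n` cylinder meeting `C`. The group induced by `G` on level `n`
is transitive, so a uniformly random element of it moves a fixed word into a given set `V` of
words with probability `|V| / d ^ n`. Averaging the `G`-invariance of `ν` over this finite group
gives `ν {B | B ⊆ Ã, B ⊄ A} ≤ d ^ n₀ * μ Uₙ`, where `Uₙ` is the union of the level-`n` cylinders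
meeting `C`; these decrease to the closed `μ`-null set `C`.
-/

open scoped ENNReal Topology Finset
open Filter Function

theorem MulAction.card_filter_smul_mem_mul_card {Q W : Type*} [Group Q] [Fintype Q]
    [MulAction Q W] [Fintype W] [DecidableEq W] [MulAction.IsPretransitive Q W]
    (w : W) (V : Finset W) :
    #{q : Q | q • w ∈ V} * Fintype.card W = #V * Fintype.card Q := by
  have hconst : ∀ w', #{q : Q | q • w' ∈ V} = #{q : Q | q • w ∈ V} := by
    intro w'
    obtain ⟨h, rfl⟩ := MulAction.exists_smul_eq Q w w'
    simp only [Finset.card_filter, smul_smul]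
    exact Fintype.sum_equiv (Equiv.mulRight h) _ _ fun _ => rfl
  have hrow : ∀ q : Q, #{w' : W | q • w' ∈ V} = #V := fun q =>
    Finset.card_bij' (fun w' _ => q • w') (fun v _ => q⁻¹ • v) (by simp) (by simp)
      (by simp) (by simp)
  calc #{q : Q | q • w ∈ V} * Fintype.card W
      = ∑ w' : W, #{q : Q | q • w' ∈ V} := by simp [hconst, mul_comm]
    _ = ∑ q : Q, #{w' : W | q • w' ∈ V} := by
      simp only [Finset.card_filter]
      exact Finset.sum_comm
    _ = #V * Fintype.card Q := by simp [hrow, mul_comm]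

theorem MeasureTheory.card_mul_measure_le_of_forall_card_le {α β ι : Type*} [MeasurableSpace α]
    [MeasurableSpace β] [Fintype ι] {μ : Measure α} {ν : Measure β} {f : ι → α → β}
    (hf : ∀ i, MeasurePreserving (f i) μ ν) {E : Set β} [DecidablePred (· ∈ E)]
    (hE : MeasurableSet E) {c : ℝ≥0∞}
    (hc : ∀ x, (#{i | f i x ∈ E} : ℝ≥0∞) ≤ c) :
    Fintype.card ι * ν E ≤ c * μ univ := by
  have hpre : ∀ i, MeasurableSet (f i ⁻¹' E) := fun i => (hf i).measurable hE
  calc Fintype.card ι * ν E = ∑ i, μ (f i ⁻¹' E) := by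
        simp [(hf _).measure_preimage hE.nullMeasurableSet]
    _ = ∫⁻ x, ∑ i, (f i ⁻¹' E).indicator 1 x ∂μ := by
        rw [lintegral_finsetSum _ fun i _ => measurable_one.indicator (hpre i)]
        simp [lintegral_indicator_one (hpre _)]
    _ = ∫⁻ x, (#{i | f i x ∈ E} : ℝ≥0∞) ∂μ := by
        simp only [Finset.card_filter, Nat.cast_sum, Nat.cast_ite, Nat.cast_one, Nat.cast_zero,
          Set.indicator, mem_preimage, Pi.one_apply]
    _ ≤ c * μ univ := (lintegral_mono hc).trans_eq (lintegral_const c)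

theorem exists_finset_subset_card_le_forall_exists_eq {α β : Type*} [Fintype β]
    (f : α → β) (B : Set α) :
    ∃ R : Finset α, ↑R ⊆ B ∧ #R ≤ Fintype.card β ∧ ∀ x ∈ B, ∃ r ∈ R, f r = f x := by
  obtain ⟨R, hRB, hR⟩ := exists_subset_bijOn B f
  have hfin : R.Finite := (Set.toFinite (f '' R)).of_finite_image hR.injOn
  refine ⟨hfin.toFinset, by simpa using hRB, ?_, fun x hx => ?_⟩
  · exact Finset.card_le_card_of_injOn f (fun _ _ => Finset.mem_univ _) (by simpa using hR.injOn)
  · obtain ⟨r, hr, hrx⟩ := hR.surjOn (mem_image_of_mem f hx)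
    exact ⟨r, by simpa using hr, hrx⟩

namespace TreeBoundary

variable {d : ℕ}

def trunc (n : ℕ) (x : XX d) : Fin n → Fin d := fun i => x i

theorem trunc_eq_trunc_iff {n : ℕ} {x y : XX d} :
    trunc n x = trunc n y ↔ dist x y ≤ (1 / 2) ^ n := by
  refine funext_iff.trans (Iff.trans ?_ PiNat.mem_cylinder_iff_dist_le)
  exact ⟨fun h i hi => h ⟨i, hi⟩, fun h i => h i i.2⟩

theorem trunc_apply_eq_of_trunc_eq (g : XX d ≃ᵢ XX d) {n : ℕ} {x y : XX d}
    (h : trunc n x = trunc n y) : trunc n (g x) = trunc n (g y) := by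
  rwa [trunc_eq_trunc_iff, g.dist_eq, ← trunc_eq_trunc_iff]

theorem measurable_trunc (n : ℕ) : Measurable (trunc (d := d) n) :=
  measurable_pi_lambda _ fun _ => measurable_pi_apply _

theorem Cyl_ofFn {n : ℕ} (w : Fin n → Fin d) : Cyl (List.ofFn w) = trunc n ⁻¹' {w} := by
  ext x
  simp only [Cyl, mem_ofPred_eq, List.get_ofFn, mem_preimage, mem_singleton_iff, funext_iff, trunc]
  exact ⟨fun h i => by simpa using h (Fin.cast (by simp) i),
    fun h i => by simpa using h (Fin.cast (by simp) i)⟩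

theorem Cyl_nil : Cyl ([] : List (Fin d)) = univ :=
  eq_univ_of_forall fun _ i => i.elim0

theorem trunc_preimage_image_eq_cthickening {C : Set (XX d)} (hC : IsCompact C) (n : ℕ) :
    trunc n ⁻¹' (trunc n '' C) = Metric.cthickening ((1 / 2) ^ n) C := by
  rw [hC.cthickening_eq_biUnion_closedBall (by positivity)]
  ext x
  simp only [mem_preimage, mem_image, mem_iUnion, Metric.mem_closedBall, exists_prop,
    ← trunc_eq_trunc_iff]
  exact exists_congr fun c => and_congr_right fun _ => eq_comm

theorem tendsto_measure_trunc_preimage_image (μ : Measure (XX d)) [IsFiniteMeasure μ]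
    {C : Set (XX d)} (hC : IsClosed C) :
    Tendsto (fun n => μ (trunc n ⁻¹' (trunc n '' C))) atTop (𝓝 (μ C)) := by
  simp_rw [trunc_preimage_image_eq_cthickening hC.isCompact]
  exact (tendsto_measure_cthickening_of_isClosed ⟨1, one_pos, measure_ne_top _ _⟩ hC).comp
    (tendsto_pow_atTop_nhds_zero_of_lt_one (by norm_num) (by norm_num))

theorem surjective_trunc [NeZero d] (n : ℕ) : Surjective (trunc (d := d) n) := fun w =>
  ⟨fun i => if h : i < n then w ⟨i, h⟩ else 0, funext fun i => by simp [trunc, i.2]⟩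

-- Well defined since isometries map level-`n` cylinders onto level-`n` cylinders.
def levelMap [NeZero d] (n : ℕ) (g : XX d ≃ᵢ XX d) (w : Fin n → Fin d) : Fin n → Fin d :=
  trunc n (g (surjInv (surjective_trunc n) w))

theorem levelMap_trunc [NeZero d] (n : ℕ) (g : XX d ≃ᵢ XX d) (x : XX d) :
    levelMap n g (trunc n x) = trunc n (g x) :=
  trunc_apply_eq_of_trunc_eq g (surjInv_eq _ _)

def levelPerm [NeZero d] (n : ℕ) : (XX d ≃ᵢ XX d) →* Equiv.Perm (Fin n → Fin d) where
  toFun g :=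
    { toFun := levelMap n g
      invFun := levelMap n g.symm
      left_inv := (surjective_trunc n).forall.2 fun x => by simp [levelMap_trunc]
      right_inv := (surjective_trunc n).forall.2 fun x => by simp [levelMap_trunc] }
  map_one' := Equiv.ext <| (surjective_trunc n).forall.2 fun x => by simp [levelMap_trunc]
  map_mul' g h := Equiv.ext <| (surjective_trunc n).forall.2 fun x => by simp [levelMap_trunc]

theorem levelPerm_trunc [NeZero d] (n : ℕ) (g : XX d ≃ᵢ XX d) (x : XX d) :
    levelPerm n g (trunc n x) = trunc n (g x) :=
  levelMap_trunc n g x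

theorem isPretransitive_map_levelPerm [NeZero d]
    {G : Subgroup (XX d ≃ᵢ XX d)} (hG : LevelTransitive G) (n : ℕ) :
    MulAction.IsPretransitive (G.map (levelPerm n)) (Fin n → Fin d) := by
  refine ⟨(surjective_trunc n).forall.2 fun x v => ?_⟩
  obtain ⟨g, hg, hgx⟩ := hG (List.ofFn (trunc n x)) (List.ofFn v) (by simp)
  refine ⟨⟨levelPerm n g, Subgroup.mem_map_of_mem _ hg⟩, ?_⟩
  have : g x ∈ trunc n ⁻¹' {v} := by
    rw [← Cyl_ofFn, ← hgx, Cyl_ofFn]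
    exact mem_image_of_mem _ rfl
  exact (levelPerm_trunc n g x).trans this

theorem exists_trunc_eq_imp_mem_iff_of_isClopen {A : Set (XX d)} (hA : IsClopen A) :
    ∃ n, ∀ x y, trunc n x = trunc n y → (x ∈ A ↔ y ∈ A) := by
  classical
  obtain ⟨δ, hδ, hball⟩ := lebesgue_number_lemma_of_metric (c := fun b : Bool => {x | (x ∈ A) = b})
    isCompact_univ (fun b => by cases b <;> simp [hA.isOpen, hA.compl.isOpen, ← compl_def])
    (fun x _ => mem_iUnion.2 ⟨decide (x ∈ A), by simp⟩)
  obtain ⟨n, hn⟩ := exists_pow_lt_of_lt_one hδ (by norm_num : (1 / 2 : ℝ) < 1)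
  refine ⟨n, fun x y hxy => ?_⟩
  obtain ⟨b, hb⟩ := hball x (mem_univ x)
  have hy : y ∈ Metric.ball x δ := (trunc_eq_trunc_iff.1 hxy.symm).trans_lt hn
  have hx : (x ∈ A) = b := hb (Metric.mem_ball_self hδ)
  rw [hx, hb hy]

theorem measure_trunc_preimage {μ : Measure (XX d)}
    (hμ : ∀ w : List (Fin d), μ (Cyl w) = (1 / (d : ℝ≥0∞)) ^ w.length) {n : ℕ}
    (V : Finset (Fin n → Fin d)) : μ (trunc n ⁻¹' V) = #V * (1 / (d : ℝ≥0∞)) ^ n := by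
  rw [← sum_measure_preimage_singleton V fun _ _ => measurable_trunc n (measurableSet_singleton _)]
  simp [← Cyl_ofFn, hμ]

theorem exists_mem_apply_mem_diff {A Atil B R : Set (XX d)} {n : ℕ}
    (hA : ∀ x y, trunc n x = trunc n y → (x ∈ A ↔ y ∈ A)) (hRB : R ⊆ B)
    (hR : ∀ x ∈ B, ∃ r ∈ R, trunc n r = trunc n x) {g : XX d ≃ᵢ XX d}
    (hsub : g '' B ⊆ Atil) (hnot : ¬ g '' B ⊆ A) : ∃ r ∈ R, g r ∈ Atil \ A := by
  obtain ⟨_, ⟨x, hx, rfl⟩, hgx⟩ := not_subset.1 hnot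
  obtain ⟨r, hr, hrx⟩ := hR x hx
  refine ⟨r, hr, hsub (mem_image_of_mem g (hRB hr)), fun hgr => hgx ?_⟩
  exact (hA _ _ (trunc_apply_eq_of_trunc_eq g hrx)).1 hgr

open Classical in
theorem card_filter_imageNC_mem_le [NeZero d] {G : Subgroup (XX d ≃ᵢ XX d)}
    (hG : LevelTransitive G) {A Atil : Set (XX d)} {n₀ : ℕ}
    (hA : ∀ x y, trunc n₀ x = trunc n₀ y → (x ∈ A ↔ y ∈ A)) (n : ℕ)
    (lift : G.map (levelPerm n) → XX d ≃ᵢ XX d) (hlift : ∀ q, levelPerm n (lift q) = q)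
    (B : NonemptyCompacts (XX d)) :
    #{q | imageNC (lift q) B ∈ {K | ↑K ⊆ Atil} \ {K | ↑K ⊆ A}} * d ^ n ≤
      d ^ n₀ * (#(trunc n '' (Atil \ A)).toFinset * Fintype.card (G.map (levelPerm n))) := by
  have := isPretransitive_map_levelPerm hG n
  set V := (trunc n '' (Atil \ A)).toFinset
  obtain ⟨R, hRB, hRcard, hR⟩ := exists_finset_subset_card_le_forall_exists_eq (trunc n₀) B.1.1
  have hcover : ({q | imageNC (lift q) B ∈ {K | ↑K ⊆ Atil} \ {K | ↑K ⊆ A}} : Finset _) ⊆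
      R.biUnion fun r => {q | q • trunc n r ∈ V} := by
    intro q hq
    obtain ⟨r, hr, hrC⟩ := exists_mem_apply_mem_diff hA hRB hR (Finset.mem_filter.1 hq).2.1
      (Finset.mem_filter.1 hq).2.2
    have hq_r : q • trunc n r = trunc n (lift q r) := by
      rw [← levelPerm_trunc, hlift]
      rfl
    simpa [V] using ⟨r, hr, _, hrC, hq_r.symm⟩
  calc #{q | imageNC (lift q) B ∈ {K | ↑K ⊆ Atil} \ {K | ↑K ⊆ A}} * d ^ n
      ≤ (∑ r ∈ R, #{q : G.map (levelPerm n) | q • trunc n r ∈ V}) * d ^ n := by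
        gcongr
        exact (Finset.card_le_card hcover).trans Finset.card_biUnion_le
    _ = #R * (#V * Fintype.card (G.map (levelPerm n))) := by
        rw [Finset.sum_mul, Finset.sum_congr rfl fun r _ => by
          simpa using MulAction.card_filter_smul_mem_mul_card (trunc n r) V]
        simp
    _ ≤ d ^ n₀ * (#V * Fintype.card (G.map (levelPerm n))) := by
        gcongr
        simpa using hRcard

theorem measure_subsets_sdiff_le [NeZero d] {G : Subgroup (XX d ≃ᵢ XX d)}
    (hG : LevelTransitive G) {ν : Measure (NonemptyCompacts (XX d))} [IsProbabilityMeasure ν]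
    (hinv : ∀ g ∈ G, MeasurePreserving (imageNC g) ν ν) {μ : Measure (XX d)}
    (hμ : ∀ w : List (Fin d), μ (Cyl w) = (1 / (d : ℝ≥0∞)) ^ w.length)
    {A Atil : Set (XX d)} (hA : IsClosed A) (hAtil : IsClosed Atil) {n₀ : ℕ}
    (hA₀ : ∀ x y, trunc n₀ x = trunc n₀ y → (x ∈ A ↔ y ∈ A)) (n : ℕ) :
    ν ({K | ↑K ⊆ Atil} \ {K | ↑K ⊆ A}) ≤ d ^ n₀ * μ (trunc n ⁻¹' (trunc n '' (Atil \ A))) := by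
  classical
  set Q := G.map (levelPerm n)
  set V := (trunc n '' (Atil \ A)).toFinset
  choose lift hliftG hlift using fun q : Q => Subgroup.mem_map.1 q.2
  have hd : (d : ℝ≥0∞) ^ n * (1 / (d : ℝ≥0∞)) ^ n = 1 := by
    rw [← mul_pow, mul_one_div, ENNReal.div_self (by simp [NeZero.ne d]) (by simp), one_pow]
  have hcount : ∀ B : NonemptyCompacts (XX d),
      (#{q | imageNC (lift q) B ∈ {K | ↑K ⊆ Atil} \ {K | ↑K ⊆ A}} : ℝ≥0∞) ≤
        Fintype.card Q * (d ^ n₀ * (#V * (1 / (d : ℝ≥0∞)) ^ n)) := fun B =>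
    calc (#{q | imageNC (lift q) B ∈ {K | ↑K ⊆ Atil} \ {K | ↑K ⊆ A}} : ℝ≥0∞)
        = (#{q | imageNC (lift q) B ∈ {K | ↑K ⊆ Atil} \ {K | ↑K ⊆ A}} * d ^ n : ℕ) *
            (1 / (d : ℝ≥0∞)) ^ n := by push_cast; rw [mul_assoc, hd, mul_one]
      _ ≤ (d ^ n₀ * (#V * Fintype.card Q) : ℕ) * (1 / (d : ℝ≥0∞)) ^ n := by
        gcongr ?_ * _
        exact Nat.cast_le.2 (card_filter_imageNC_mem_le hG hA₀ n lift hlift B)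
      _ = Fintype.card Q * (d ^ n₀ * (#V * (1 / (d : ℝ≥0∞)) ^ n)) := by push_cast; ring
  have hE : MeasurableSet ({K | ↑K ⊆ Atil} \ {K | ↑K ⊆ A} : Set (NonemptyCompacts (XX d))) :=
    (NonemptyCompacts.isClosed_subsets_of_isClosed hAtil).measurableSet.diff
      (NonemptyCompacts.isClosed_subsets_of_isClosed hA).measurableSet
  have hQ := card_mul_measure_le_of_forall_card_le (fun q => hinv _ (hliftG q)) hE hcount
  rw [measure_univ, mul_one] at hQ
  rw [← Set.coe_toFinset (trunc n '' (Atil \ A)), measure_trunc_preimage hμ]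
  exact (ENNReal.mul_le_mul_iff_right (by simp) (by simp)).1 hQ

end TreeBoundary

open TreeBoundary

/-- let `G` be a weakly branch group, `ν` a `G`-invariant Borel probability
measure on the space of nonempty compact subsets of `X_d` (with the Hausdorff metric), `A`
clopen, `Ã ⊇ A` closed with `μ_d(Ã \ A) = 0` for the uniform Bernoulli measure `μ_d`. Then
`ν {B : B ⊆ Ã} = ν {B : B ⊆ A}`. -/
theorem stmt_8 (d : ℕ) (hd : 2 ≤ d) (G : Subgroup (XX d ≃ᵢ XX d)) (hG : WeaklyBranch G)
    (ν : Measure (NonemptyCompacts (XX d))) [IsProbabilityMeasure ν]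
    (hinv : ∀ g : XX d ≃ᵢ XX d, g ∈ G → MeasurePreserving (imageNC g) ν ν)
    (μ : Measure (XX d))
    (hμ : ∀ w : List (Fin d), μ (Cyl w) = (1 / (d : ENNReal)) ^ w.length)
    (A Atil : Set (XX d)) (hA : IsClopen A) (hAtil : IsClosed Atil)
    (hsub : A ⊆ Atil) (hnull : μ (Atil \ A) = 0) :
    ν {B : NonemptyCompacts (XX d) | (B : Set (XX d)) ⊆ Atil} =
      ν {B : NonemptyCompacts (XX d) | (B : Set (XX d)) ⊆ A} := by
  have : NeZero d := ⟨by omega⟩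
  have : IsProbabilityMeasure μ := ⟨by simpa [Cyl_nil] using hμ []⟩
  obtain ⟨n₀, hA₀⟩ := exists_trunc_eq_imp_mem_iff_of_isClopen hA
  have hlim : Tendsto (fun n => (d : ℝ≥0∞) ^ n₀ * μ (trunc n ⁻¹' (trunc n '' (Atil \ A))))
      atTop (𝓝 0) := by
    simpa [hnull] using ENNReal.Tendsto.const_mul
      (tendsto_measure_trunc_preimage_image μ (hAtil.sdiff hA.isOpen)) (by simp)
  refine (measure_eq_measure_of_null_sdiff (fun B hB => hB.trans hsub) ?_).symm
  exact le_antisymm (ge_of_tendsto' hlim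
    (measure_subsets_sdiff_le hG.1 hinv hμ hA.isClosed hAtil hA₀)) zero_le
end
end

section
/- Fix d ≥ 2 and a strictly increasing sequence (n_j)_{j∈ℕ} of positive integers such that n_{j+1} > n_j + 1 for infinitely many j. For x ∈ X_d = ℕ → Fin d let v_j(x) and w_j(x) be the prefixes of x of lengths n_j and n_j + 1, and define C(x) = {x} ∪ ⋃_{j∈ℕ} (Cyl(v_j(x)) \ Cyl(w_j(x))). Then: (i) for every bijective isometry g of X_d and every x ∈ X_d one has g(C(x)) = C(g x); (ii) the map x ↦ C(x) is injective; (iii) if (n_j) and (m_j) are two distinct strictly increasing sequences, each satisfying the gap condition, then C_{(n_j)}(x) ≠ C_{(m_j)}(y) for all x, y ∈ X_d. -/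
open Set MeasureTheory TopologicalSpace

noncomputable section

/-- The prefix of length `k` of an infinite word `x`. -/
def prefixW {d : ℕ} (x : XX d) (k : ℕ) : List (Fin d) :=
  List.ofFn (fun i : Fin k => x i.1)

/-- The closed set `C(x) = {x} ∪ ⋃_j (Cyl(v_j(x)) \ Cyl(w_j(x)))`, where `v_j(x)` and
`w_j(x)` are the prefixes of `x` of lengths `n j` and `n j + 1`. -/
def CSet (d : ℕ) (n : ℕ → ℕ) (x : XX d) : Set (XX d) :=
  {x} ∪ ⋃ j : ℕ, (Cyl (prefixW x (n j)) \ Cyl (prefixW x (n j + 1)))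

lemma mem_Cyl {d : ℕ} (x z : XX d) (k : ℕ) :
    z ∈ Cyl (prefixW x k) ↔ ∀ i < k, z i = x i := by
  simp [Cyl, prefixW, Fin.forall_iff]

lemma Cyl_eq_closedBall {d : ℕ} (x : XX d) (k : ℕ) :
    Cyl (prefixW x k) = Metric.closedBall x ((1/2 : ℝ)^k) := by
  ext z
  rw [mem_Cyl, Metric.mem_closedBall]
  exact PiNat.mem_cylinder_iff_dist_le

lemma mem_CSet {d : ℕ} (nn : ℕ → ℕ) (x z : XX d) :
    z ∈ CSet d nn x ↔ z = x ∨ ∃ j, (∀ i < nn j, z i = x i) ∧ z (nn j) ≠ x (nn j) := by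
  simp only [CSet, mem_union, mem_singleton_iff, mem_iUnion, mem_diff, mem_Cyl]
  apply or_congr_right
  apply exists_congr; intro j
  constructor
  · rintro ⟨h1, h2⟩
    refine ⟨h1, fun hz => h2 ?_⟩
    intro i hi
    rcases Nat.lt_succ_iff_lt_or_eq.1 hi with h | h
    · exact h1 i h
    · rw [h]; exact hz
  · rintro ⟨h1, h2⟩
    exact ⟨h1, fun h => h2 (h _ (Nat.lt_succ_self _))⟩

/-- The flip of `x` at coordinate `k`. -/
def flipAt {d : ℕ} (x : XX d) (k : ℕ) : XX d :=
  Function.update x k ⟨(x k + 1) % d, Nat.mod_lt _ (x k).pos⟩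

lemma flipAt_apply_ne {d : ℕ} (hd : 2 ≤ d) (x : XX d) (k : ℕ) :
    flipAt x k k ≠ x k := by
  simp only [flipAt, Function.update_self]
  intro h
  have hv : ((x k : ℕ) + 1) % d = (x k : ℕ) := congrArg Fin.val h
  have hlt : (x k : ℕ) < d := (x k).2
  rcases lt_or_eq_of_le (Nat.succ_le_of_lt hlt) with h' | h'
  · rw [Nat.mod_eq_of_lt h'] at hv; omega
  · rw [show (x k : ℕ) + 1 = d by omega, Nat.mod_self] at hv; omega

lemma flipAt_apply_of_ne {d : ℕ} (x : XX d) {k i : ℕ} (h : i ≠ k) :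
    flipAt x k i = x i := by
  unfold flipAt; exact Function.update_of_ne h _ _

lemma eq_of_CSet_eq {d : ℕ} (hd : 2 ≤ d) (nn mm : ℕ → ℕ) (hn : StrictMono nn)
    (hngap : {j : ℕ | nn j + 1 < nn (j + 1)}.Infinite) (x y : XX d)
    (h : CSet d nn x = CSet d mm y) : x = y := by
  by_contra hxy
  have hx : x ∈ CSet d mm y := h ▸ (mem_CSet nn x x).2 (Or.inl rfl)
  rcases (mem_CSet mm y x).1 hx with h' | ⟨j, hj1, hj2⟩
  · exact hxy h'
  -- x and y agree below f := mm j and differ at f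
  set f := mm j with hf
  -- choose a gap index l with nn l > f
  obtain ⟨l, hlgap, hlf⟩ : ∃ l, nn l + 1 < nn (l + 1) ∧ f < nn l := by
    obtain ⟨l, hl1, hl2⟩ := hngap.exists_gt (f + 1)
    have : l ≤ nn l := hn.le_apply
    exact ⟨l, hl1, by omega⟩
  set z := flipAt x (nn l + 1) with hz
  have hzx : ∀ i, i ≠ nn l + 1 → z i = x i := fun i hi => flipAt_apply_of_ne x hi
  have hzne : z (nn l + 1) ≠ x (nn l + 1) := flipAt_apply_ne hd x _
  -- z ∈ CSet mm y
  have hzmem : z ∈ CSet d mm y := by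
    refine (mem_CSet mm y z).2 (Or.inr ⟨j, ?_, ?_⟩)
    · intro i hi
      rw [hzx i (by omega)]
      exact hj1 i hi
    · rw [hzx f (by omega)]
      exact hj2
  rw [← h] at hzmem
  rcases (mem_CSet nn x z).1 hzmem with h' | ⟨k, hk1, hk2⟩
  · exact hzne (congrFun h' _)
  · -- z differs from x only at nn l + 1, so nn k = nn l + 1
    have hkval : nn k = nn l + 1 := by
      by_contra hne
      exact hk2 (hzx _ hne)
    have hkl : l < k := by
      by_contra hle
      push_neg at hle
      have := hn.le_iff_le.2 hle
      omega
    have : nn (l + 1) ≤ nn k := hn.le_iff_le.2 hkl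
    omega

lemma seq_eq_of_CSet_eq {d : ℕ} (hd : 2 ≤ d) (nn mm : ℕ → ℕ) (hn : StrictMono nn)
    (hm : StrictMono mm) (x : XX d) (h : CSet d nn x = CSet d mm x) : nn = mm := by
  have key : ∀ (a b : ℕ → ℕ), CSet d a x = CSet d b x → range a ⊆ range b := by
    intro a b hab j'
    rintro ⟨j, rfl⟩
    set z := flipAt x (a j) with hz
    have hzmem : z ∈ CSet d a x := by
      refine (mem_CSet a x z).2 (Or.inr ⟨j, ?_, flipAt_apply_ne hd x _⟩)
      intro i hi
      exact flipAt_apply_of_ne x (by omega)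
    rw [hab] at hzmem
    rcases (mem_CSet b x z).1 hzmem with h' | ⟨k, hk1, hk2⟩
    · exact absurd (congrFun h' (a j)) (flipAt_apply_ne hd x _)
    · refine ⟨k, ?_⟩
      by_contra hne
      exact hk2 (flipAt_apply_of_ne x fun h' => hne h')
  exact ((hm.range_inj hn).1 (Set.Subset.antisymm (key mm nn h.symm) (key nn mm h))).symm

/-- for a strictly increasing sequence `n` of positive integers with
`n (j+1) > n j + 1` infinitely often: (i) `g(C(x)) = C(g x)` for every bijective isometry `g`;
(ii) `x ↦ C(x)` is injective; (iii) the sets built from two distinct such sequences are never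
equal. -/
theorem stmt_9 (d : ℕ) (hd : 2 ≤ d) (n m : ℕ → ℕ)
    (hn : StrictMono n) (hn0 : ∀ j, 0 < n j) (hngap : {j : ℕ | n j + 1 < n (j + 1)}.Infinite)
    (hm : StrictMono m) (hm0 : ∀ j, 0 < m j) (hmgap : {j : ℕ | m j + 1 < m (j + 1)}.Infinite) :
    (∀ (g : XX d ≃ᵢ XX d) (x : XX d), (g : XX d ≃ᵢ XX d) '' CSet d n x = CSet d n (g x)) ∧
    Function.Injective (CSet d n) ∧
    (n ≠ m → ∀ x y : XX d, CSet d n x ≠ CSet d m y) := by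
  have hCSet : ∀ (z : XX d), CSet d n z =
      {z} ∪ ⋃ j, (Metric.closedBall z ((1/2:ℝ)^(n j)) \ Metric.closedBall z ((1/2:ℝ)^(n j + 1))) := by
    intro z
    unfold CSet
    congr 1
    exact iUnion_congr fun j => by rw [Cyl_eq_closedBall, Cyl_eq_closedBall]
  refine ⟨?_, ?_, ?_⟩
  · intro g x
    rw [hCSet, hCSet, image_union, image_singleton, image_iUnion]
    congr 1
    refine iUnion_congr fun j => ?_
    rw [image_diff g.injective, g.image_closedBall, g.image_closedBall]
  · intro x y h
    exact eq_of_CSet_eq hd n n hn hngap x y h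
  · intro hnm x y h
    have hxy := eq_of_CSet_eq hd n m hn hngap x y h
    subst hxy
    exact hnm (seq_eq_of_CSet_eq hd n m hn hm x h)
end
end

section
/- Let X be a metric space, x ∈ X, and (x_j)_{j∈ℕ} a sequence in X \ {x} converging to x such that the distances dist(x, x_j), j ∈ ℕ, are pairwise distinct. Set C = {x} ∪ {x_j : j ∈ ℕ}. Then every isometry h : X → X satisfying h(C) = C fixes C pointwise: h x = x and h x_j = x_j for every j. -/
open Filter

/-- in a metric space, let `x` be the limit of a sequence `(x_j)` of points
distinct from `x` whose distances to `x` are pairwise distinct, and let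
`C = {x} ∪ {x_j : j ∈ ℕ}`. Then any isometry `h` with `h(C) = C` fixes `C` pointwise. -/
theorem stmt_10 {X : Type*} [MetricSpace X] (x : X) (xs : ℕ → X)
    (hne : ∀ j, xs j ≠ x)
    (hlim : Tendsto xs atTop (nhds x))
    (hdist : ∀ i j, i ≠ j → dist x (xs i) ≠ dist x (xs j))
    (h : X → X) (hiso : Isometry h)
    (hC : h '' ({x} ∪ Set.range xs) = {x} ∪ Set.range xs) :
    h x = x ∧ ∀ j, h (xs j) = xs j := by
  have hinj : Function.Injective h := hiso.injective
  have hxs_inj : Function.Injective xs := by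
    intro i j hij
    by_contra hne'
    exact hdist i j hne' (by rw [hij])
  have hmem : ∀ y ∈ ({x} ∪ Set.range xs : Set X), h y ∈ ({x} ∪ Set.range xs : Set X) := by
    intro y hy
    rw [← hC]
    exact ⟨y, hy, rfl⟩
  have hxC : h x ∈ ({x} ∪ Set.range xs : Set X) := hmem x (Or.inl rfl)
  have hfix : h x = x := by
    rcases hxC with hx | ⟨k, hk⟩
    · exact hx
    exfalso
    have hdpos : 0 < dist x (xs k) := dist_pos.mpr (fun e => hne k e.symm)
    set d := dist x (xs k) with hd
    obtain ⟨N, hN⟩ := Metric.tendsto_atTop.mp hlim (d / 2) (by linarith)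
    set F := (Finset.range N).erase k with hF
    set S := insert (d / 2) (F.image fun j => dist (xs k) (xs j)) with hS
    have hSne : S.Nonempty := ⟨d / 2, Finset.mem_insert_self _ _⟩
    set ε := S.min' hSne with hε
    have hεd : ε ≤ d / 2 := Finset.min'_le _ _ (Finset.mem_insert_self _ _)
    have hεF : ∀ j ∈ F, ε ≤ dist (xs k) (xs j) := fun j hj =>
      Finset.min'_le _ _ (Finset.mem_insert_of_mem (Finset.mem_image_of_mem _ hj))
    have hεpos : 0 < ε := by
      have hmin := S.min'_mem hSne
      rw [← hε] at hmin
      rcases Finset.mem_insert.mp hmin with e | e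
      · rw [e]; linarith
      · obtain ⟨j, hj, hje⟩ := Finset.mem_image.mp e
        rw [← hje, dist_pos]
        intro eq
        exact (Finset.mem_erase.mp hj).1 (hxs_inj eq.symm)
    have htend : Tendsto (fun n => h (xs n)) atTop (nhds (xs k)) := by
      rw [hk]
      exact (hiso.continuous.tendsto x).comp hlim
    obtain ⟨M, hM⟩ := Metric.tendsto_atTop.mp htend ε hεpos
    set n := max M N with hn
    have h1 : dist (h (xs n)) (xs k) < ε := hM n (le_max_left _ _)
    rcases hmem (xs n) (Or.inr ⟨n, rfl⟩) with hx2 | ⟨m, hm⟩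
    · rw [Set.mem_singleton_iff] at hx2
      have h2 : dist x (xs k) < ε := by rw [← hx2]; exact h1
      rw [← hd] at h2
      linarith
    · by_cases hmk : m = k
      · subst hmk
        exact hne n (hinj (hm.symm.trans hk))
      · by_cases hmN : m < N
        · have hmF : m ∈ F := Finset.mem_erase.mpr ⟨hmk, Finset.mem_range.mpr hmN⟩
          have h2 := hεF m hmF
          rw [hm, dist_comm] at h2
          linarith
        · have h3 : dist (xs m) x < d / 2 := hN m (le_of_not_gt hmN)
          have h4 : dist x (xs k) ≤ dist x (xs m) + dist (xs m) (xs k) :=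
            dist_triangle _ _ _
          rw [hm] at h4
          rw [← hd] at h4
          have h5 : dist x (h (xs n)) < d / 2 := by
            rw [dist_comm, ← hm]; exact h3
          have h6 : dist (h (xs n)) (xs k) < ε := h1
          linarith
  refine ⟨hfix, fun j => ?_⟩
  rcases hmem (xs j) (Or.inr ⟨j, rfl⟩) with hx2 | ⟨m, hm⟩
  · rw [Set.mem_singleton_iff] at hx2
    exact absurd (hinj (hx2.trans hfix.symm)) (hne j)
  · have hd' : dist x (xs m) = dist x (xs j) :=
      calc dist x (xs m) = dist (h x) (h (xs j)) := by rw [hfix, ← hm]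
      _ = dist x (xs j) := hiso.dist_eq _ _
    have hmj : m = j := by
      by_contra hmj
      exact hdist m j hmj hd'
    rw [← hm, hmj]
end

section
/- Let X be a metric space. Let x ∈ X and (x_j)_{j∈ℕ} a sequence in X \ {x} converging to x with the distances dist(x, x_j) pairwise distinct; let y ∈ X and (y_j)_{j∈ℕ} a sequence in X \ {y} converging to y with the distances dist(y, y_j) pairwise distinct. Set C = {x} ∪ {x_j : j ∈ ℕ} and D = {y} ∪ {y_j : j ∈ ℕ}. If there exists a bijective isometry h of X with h(C) = D, then h x = y and the distance sets coincide: {dist(x, x_j) : j ∈ ℕ} = {dist(y, y_j) : j ∈ ℕ}. -/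
open Filter

/-- Auxiliary: in `D = {y} ∪ range ys` with `ys → y` and `ys j ≠ y`, the only point of `D`
that is in the closure of `D` minus itself is `y`. -/
theorem aux_isolated {X : Type*} [MetricSpace X] (y : X) (ys : ℕ → X)
    (hylim : Tendsto ys atTop (nhds y)) (z : X)
    (hcl : z ∈ closure ((({y} ∪ Set.range ys) : Set X) \ {z})) : z = y := by
  by_contra hzy
  have hd : 0 < dist y z := dist_pos.2 (Ne.symm hzy)
  have hr : 0 < dist y z / 2 := by linarith
  set r := dist y z / 2 with hrdef
  obtain ⟨N, hN⟩ := (Metric.tendsto_atTop.1 hylim) r hr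
  set D : Set X := {y} ∪ Set.range ys with hD
  set S : Set X := (D \ {z}) ∩ Metric.ball z r with hS
  have hSfin : S.Finite := by
    apply Set.Finite.subset ((Set.finite_Iio N).image ys)
    rintro w ⟨⟨hwD, hwz⟩, hwball⟩
    have hwz' : w ≠ z := hwz
    have hwr : dist w z < r := hwball
    rcases hwD with hw | ⟨n, rfl⟩
    · exfalso
      have : w = y := hw
      subst this
      rw [hrdef] at hwr
      rw [dist_comm] at hd
      linarith [dist_comm w z ▸ hwr]
    · refine ⟨n, ?_, rfl⟩
      simp only [Set.mem_Iio]
      by_contra hn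
      push_neg at hn
      have h1 : dist (ys n) y < r := hN n hn
      have h2 : dist y z ≤ dist y (ys n) + dist (ys n) z := dist_triangle _ _ _
      rw [dist_comm y (ys n)] at h2
      have : dist (ys n) z < r := hwr
      rw [hrdef] at *
      linarith
  have hsplit : D \ {z} ⊆ S ∪ ((D \ {z}) \ Metric.ball z r) := by
    intro w hw
    by_cases hwb : w ∈ Metric.ball z r
    · exact Or.inl ⟨hw, hwb⟩
    · exact Or.inr ⟨hw, hwb⟩
  have hz2 : z ∈ closure (S ∪ ((D \ {z}) \ Metric.ball z r)) :=
    closure_mono hsplit hcl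
  rw [closure_union] at hz2
  rcases hz2 with hz2 | hz2
  · rw [hSfin.isClosed.closure_eq] at hz2
    exact hz2.1.2 rfl
  · have hsub : (D \ {z}) \ Metric.ball z r ⊆ (Metric.ball z r)ᶜ := fun w hw => hw.2
    have := (closure_mono hsub).trans_eq
      (Metric.isOpen_ball.isClosed_compl.closure_eq) hz2
    exact this (Metric.mem_ball_self hr)

/-- in a metric space, let `C = {x} ∪ {x_j}` and `D = {y} ∪ {y_j}` be built
from sequences of points distinct from their limits `x`, `y`, with pairwise distinct
distances to the limit. If a bijective isometry `h` satisfies `h(C) = D`, then `h x = y` and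
the two sets of distances coincide. -/
theorem stmt_11 {X : Type*} [MetricSpace X] (x y : X) (xs ys : ℕ → X)
    (hxne : ∀ j, xs j ≠ x) (hxlim : Tendsto xs atTop (nhds x))
    (hxdist : ∀ i j, i ≠ j → dist x (xs i) ≠ dist x (xs j))
    (hyne : ∀ j, ys j ≠ y) (hylim : Tendsto ys atTop (nhds y))
    (hydist : ∀ i j, i ≠ j → dist y (ys i) ≠ dist y (ys j))
    (h : X ≃ᵢ X)
    (hCD : (h : X → X) '' ({x} ∪ Set.range xs) = {y} ∪ Set.range ys) :
    h x = y ∧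
      {r : ℝ | ∃ j, r = dist x (xs j)} = {r : ℝ | ∃ j, r = dist y (ys j)} := by
  set C : Set X := {x} ∪ Set.range xs with hC
  set D : Set X := {y} ∪ Set.range ys with hD
  have hinj : Function.Injective (h : X → X) := h.injective
  -- x is in the closure of C \ {x}
  have hxcl : x ∈ closure (C \ {x}) := by
    apply mem_closure_of_tendsto hxlim
    filter_upwards with n
    exact ⟨Or.inr ⟨n, rfl⟩, hxne n⟩
  -- h x is in the closure of D \ {h x}
  have himg : (h : X → X) '' (C \ {x}) = D \ {h x} := by
    rw [Set.image_diff hinj, hCD, Set.image_singleton]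
  have hhxcl : h x ∈ closure (D \ {h x}) := by
    rw [← himg]
    exact map_mem_closure h.continuous hxcl (fun w hw => Set.mem_image_of_mem _ hw)
  have hxy : h x = y := aux_isolated y ys hylim (h x) hhxcl
  refine ⟨hxy, ?_⟩
  -- h maps range xs onto range ys
  have hxnotmem : x ∉ Set.range xs := by rintro ⟨j, hj⟩; exact hxne j hj
  have hkey : (h : X → X) '' Set.range xs = Set.range ys := by
    have h1 : (h : X → X) '' Set.range xs = D \ {y} := by
      have : Set.range xs = C \ {x} := by
        rw [hC]
        ext w
        constructor
        · rintro ⟨j, rfl⟩; exact ⟨Or.inr ⟨j, rfl⟩, hxne j⟩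
        · rintro ⟨hw, hwx⟩
          rcases hw with hw | hw
          · exact absurd hw hwx
          · exact hw
      rw [this, himg, hxy]
    rw [h1, hD]
    ext w
    constructor
    · rintro ⟨hw | hw, hwy⟩
      · exact absurd hw hwy
      · exact hw
    · rintro ⟨j, rfl⟩
      exact ⟨Or.inr ⟨j, rfl⟩, hyne j⟩
  ext r
  simp only [Set.mem_setOf_eq]
  constructor
  · rintro ⟨j, rfl⟩
    have : h (xs j) ∈ Set.range ys := hkey ▸ ⟨xs j, ⟨j, rfl⟩, rfl⟩
    obtain ⟨k, hk⟩ := this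
    refine ⟨k, ?_⟩
    rw [hk, ← hxy, h.dist_eq]
  · rintro ⟨j, rfl⟩
    have : ys j ∈ (h : X → X) '' Set.range xs := hkey ▸ ⟨j, rfl⟩
    obtain ⟨w, ⟨k, rfl⟩, hw⟩ := this
    refine ⟨k, ?_⟩
    rw [← hw, ← hxy, h.dist_eq]
end

section
/- Let d ≥ 2 and let K be a group of bijective isometries of X_d = ℕ → Fin d with the property that for all k_0, …, k_{d−1} ∈ K the transformation of X_d sending i⌢x to i⌢(k_i x) (for each letter i ∈ Fin d and each x ∈ X_d) again belongs to K. Let χ₁(K) = {μ_d(Fix(k)) : k ∈ K} ⊆ [0,1]. Then for any r_0, …, r_{d−1} ∈ χ₁(K), the average (1/d)·(r_0 + ⋯ + r_{d−1}) belongs to χ₁(K). Moreover, if K is a subgroup of a group G of bijective isometries of X_d, then χ₁(K) ⊆ χ₁(G). -/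
open Set MeasureTheory TopologicalSpace

noncomputable section

/-- The infinite word with first letter `i` followed by `x` (`i⌢x`). -/
def consW {d : ℕ} (i : Fin d) (x : XX d) : XX d :=
  fun n => Nat.casesOn n i x

/-- The set of values `μ(Fix k)`, `k ∈ K`. -/
def chiSet {d : ℕ} (μ : Measure (XX d)) (K : Subgroup (XX d ≃ᵢ XX d)) : Set ℝ :=
  {t : ℝ | ∃ g ∈ K, (μ {x : XX d | (g : XX d ≃ᵢ XX d) x = x}).toReal = t}

/-!
Prefixing by a letter `i` scales `μ` by exactly `1/d`: the pull-back of `μ` along `x ↦ i⌢x`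
agrees with `d⁻¹ • μ` on cylinders, and cylinders form a π-system generating the σ-algebra
(they are a basis of the topology). If `g` acts as `i⌢x ↦ i⌢(k_i x)`, its fixed-point set is the
disjoint union of the sets `i⌢Fix(k_i)`, so `μ(Fix g)` is the average of the `μ(Fix k_i)`.
-/

section

variable {d : ℕ}

def tailW (x : XX d) : XX d := fun n => x (n + 1)

@[simp] lemma consW_zero (i : Fin d) (x : XX d) : consW i x 0 = i := rfl

@[simp] lemma tailW_consW (i : Fin d) (x : XX d) : tailW (consW i x) = x := rfl

lemma consW_zero_tailW (x : XX d) : consW (x 0) (tailW x) = x := by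
  funext n; cases n <;> rfl

lemma consW_injective (i : Fin d) : Function.Injective (consW i) :=
  Function.LeftInverse.injective (tailW_consW i)

lemma image_consW (i : Fin d) (S : Set (XX d)) :
    consW i '' S = {x | x 0 = i} ∩ tailW ⁻¹' S := by
  ext x
  constructor
  · rintro ⟨y, hy, rfl⟩
    exact ⟨rfl, hy⟩
  · rintro ⟨rfl, hx⟩
    exact ⟨tailW x, hx, consW_zero_tailW x⟩

lemma measurable_tailW : Measurable (tailW (d := d)) :=
  measurable_pi_lambda _ fun n => measurable_pi_apply (n + 1)

lemma measurable_consW (i : Fin d) : Measurable (consW i) :=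
  measurable_pi_lambda _ fun n => by
    cases n
    exacts [measurable_const, measurable_pi_apply _]

lemma measurableEmbedding_consW (i : Fin d) : MeasurableEmbedding (consW i) := by
  refine .of_measurable_inverse (measurable_consW i) ?_ measurable_tailW (tailW_consW i)
  rw [← image_univ, image_consW, preimage_univ, inter_univ]
  exact measurableSet_eq_fun (measurable_pi_apply 0) measurable_const

lemma cyl_nil : Cyl ([] : List (Fin d)) = univ :=
  eq_univ_of_forall fun _ i => i.elim0

lemma mem_cyl_cons {j : Fin d} {w : List (Fin d)} {x : XX d} :
    x ∈ Cyl (j :: w) ↔ x 0 = j ∧ tailW x ∈ Cyl w := by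
  simp only [Cyl, mem_ofPred_eq, List.length_cons, Fin.forall_fin_succ]
  rfl

lemma image_consW_cyl (i : Fin d) (w : List (Fin d)) : consW i '' Cyl w = Cyl (i :: w) := by
  ext x
  rw [image_consW, mem_cyl_cons]
  rfl

lemma cyl_eq_cylinder {w : List (Fin d)} {x : XX d} (hx : x ∈ Cyl w) :
    Cyl w = PiNat.cylinder x w.length := by
  ext y
  simp only [PiNat.mem_cylinder_iff]
  exact ⟨fun hy i hi => (hy ⟨i, hi⟩).trans (hx ⟨i, hi⟩).symm,
    fun hy i => (hy i i.2).trans (hx i)⟩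

lemma cylinder_eq_cyl (x : XX d) (n : ℕ) :
    PiNat.cylinder x n = Cyl (List.ofFn fun i : Fin n => x i) := by
  rw [cyl_eq_cylinder (x := x) fun i => by simp, List.length_ofFn]

lemma isTopologicalBasis_cyl : IsTopologicalBasis (range (Cyl (d := d))) := by
  refine (PiNat.isTopologicalBasis_cylinders _).of_isOpen_of_subset ?_ ?_
  · rintro _ ⟨w, rfl⟩
    by_cases h : (Cyl w).Nonempty
    · obtain ⟨x, hx⟩ := h
      rw [cyl_eq_cylinder hx]
      exact PiNat.isOpen_cylinder _ x _
    · rw [not_nonempty_iff_eq_empty.1 h]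
      exact isOpen_empty
  · rintro _ ⟨x, n, rfl⟩
    exact ⟨_, (cylinder_eq_cyl x n).symm⟩

lemma isPiSystem_cyl : IsPiSystem (range (Cyl (d := d))) := by
  rintro _ ⟨u, rfl⟩ _ ⟨v, rfl⟩ ⟨x, hxu, hxv⟩
  have hmax : PiNat.cylinder x u.length ∩ PiNat.cylinder x v.length =
      PiNat.cylinder x (max u.length v.length) := by
    refine subset_antisymm (fun y ⟨hyu, hyv⟩ i hi => ?_)
      (subset_inter (PiNat.cylinder_anti x (le_max_left _ _))
        (PiNat.cylinder_anti x (le_max_right _ _)))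
    rcases lt_max_iff.1 hi with hi | hi
    exacts [hyu i hi, hyv i hi]
  rw [cyl_eq_cylinder hxu, cyl_eq_cylinder hxv, hmax, cylinder_eq_cyl]
  exact mem_range_self _

lemma measurableSpace_eq_generateFrom_cyl :
    (inferInstance : MeasurableSpace (XX d)) = .generateFrom (range Cyl) := by
  rw [BorelSpace.measurable_eq (α := XX d), isTopologicalBasis_cyl.borel_eq_generateFrom]

variable {μ : Measure (XX d)}

lemma isProbabilityMeasure_of_measure_cyl
    (hμ : ∀ w : List (Fin d), μ (Cyl w) = (1 / (d : ENNReal)) ^ w.length) :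
    IsProbabilityMeasure μ :=
  ⟨by simpa [cyl_nil] using hμ []⟩

lemma comap_consW_eq_smul
    (hμ : ∀ w : List (Fin d), μ (Cyl w) = (1 / (d : ENNReal)) ^ w.length) (i : Fin d) :
    μ.comap (consW i) = (d : ENNReal)⁻¹ • μ := by
  have := isProbabilityMeasure_of_measure_cyl hμ
  have hcyl : ∀ w, μ.comap (consW i) (Cyl w) = ((d : ENNReal)⁻¹ • μ) (Cyl w) := fun w => by
    rw [(measurableEmbedding_consW i).comap_apply, image_consW_cyl, Measure.smul_apply, hμ, hμ,
      List.length_cons, pow_succ', one_div, smul_eq_mul]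
  refine ext_of_generate_finite _ measurableSpace_eq_generateFrom_cyl isPiSystem_cyl ?_ ?_
  · rintro _ ⟨w, rfl⟩
    exact hcyl w
  · simpa only [cyl_nil] using hcyl []

lemma measure_image_consW
    (hμ : ∀ w : List (Fin d), μ (Cyl w) = (1 / (d : ENNReal)) ^ w.length) (i : Fin d)
    (S : Set (XX d)) :
    μ (consW i '' S) = (d : ENNReal)⁻¹ * μ S := by
  rw [← (measurableEmbedding_consW i).comap_apply, comap_consW_eq_smul hμ, Measure.smul_apply,
    smul_eq_mul]

lemma setOf_fixed_eq_iUnion_image_consW {g : XX d → XX d} {k : Fin d → XX d → XX d}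
    (hg : ∀ i x, g (consW i x) = consW i (k i x)) :
    {x | g x = x} = ⋃ i, consW i '' {y | k i y = y} := by
  ext x
  rw [← consW_zero_tailW x]
  simp only [mem_ofPred_eq, mem_iUnion, hg, (consW_injective _).eq_iff, image_consW, mem_inter_iff,
    consW_zero, tailW_consW, mem_preimage, exists_eq_left']

open Function in
lemma pairwise_disjoint_image_consW (S : Fin d → Set (XX d)) :
    Pairwise (Disjoint on fun i => consW i '' S i) := by
  intro i j hij
  rw [onFun, disjoint_left]
  rintro _ ⟨x, -, rfl⟩ ⟨y, -, hy⟩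
  exact hij (congrFun hy 0).symm

lemma toReal_measure_setOf_fixed_eq_average
    (hμ : ∀ w : List (Fin d), μ (Cyl w) = (1 / (d : ENNReal)) ^ w.length)
    {g : XX d → XX d} {k : Fin d → XX d → XX d} (hk : ∀ i, MeasurableSet {y | k i y = y})
    (hg : ∀ i x, g (consW i x) = consW i (k i x)) :
    (μ {x | g x = x}).toReal = (∑ i, (μ {y | k i y = y}).toReal) / d := by
  have := isProbabilityMeasure_of_measure_cyl hμ
  rw [setOf_fixed_eq_iUnion_image_consW hg,
    measure_iUnion (pairwise_disjoint_image_consW _)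
      fun i => (measurableEmbedding_consW i).measurableSet_image' (hk i),
    tsum_fintype, ENNReal.toReal_sum fun i _ => measure_ne_top _ _, Finset.sum_div]
  simp only [measure_image_consW hμ, ENNReal.toReal_mul, ENNReal.toReal_inv,
    ENNReal.toReal_natCast, inv_mul_eq_div]

lemma chiSet_mono {K G : Subgroup (XX d ≃ᵢ XX d)} (hKG : K ≤ G) :
    chiSet μ K ⊆ chiSet μ G :=
  fun _ ⟨g, hg, hgt⟩ => ⟨g, hKG hg, hgt⟩

end

theorem stmt_14_general (d : ℕ) (K : Subgroup (XX d ≃ᵢ XX d))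
    (μ : Measure (XX d))
    (hμ : ∀ w : List (Fin d), μ (Cyl w) = (1 / (d : ENNReal)) ^ w.length)
    (hK : ∀ k : Fin d → (XX d ≃ᵢ XX d), (∀ i, k i ∈ K) →
      ∃ g ∈ K, ∀ (i : Fin d) (x : XX d),
        (g : XX d ≃ᵢ XX d) (consW i x) = consW i ((k i : XX d ≃ᵢ XX d) x)) :
    (∀ r : Fin d → ℝ, (∀ i, r i ∈ chiSet μ K) →
      (∑ i : Fin d, r i) / (d : ℝ) ∈ chiSet μ K) ∧
    (∀ G : Subgroup (XX d ≃ᵢ XX d), K ≤ G → chiSet μ K ⊆ chiSet μ G) := by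
  refine ⟨fun r hr => ?_, fun _ => chiSet_mono⟩
  choose k hkK hkr using hr
  obtain ⟨g, hgK, hg⟩ := hK k hkK
  refine ⟨g, hgK, ?_⟩
  have hk : ∀ i, MeasurableSet {y | k i y = y} := fun i =>
    (isClosed_eq (k i).continuous continuous_id).measurableSet
  rw [toReal_measure_setOf_fixed_eq_average hμ hk hg]
  simp only [hkr]

/-- let `K` be a group of bijective isometries of `X_d` closed under the tuple
operation `(k_0,…,k_{d-1}) ↦ (i⌢x ↦ i⌢(k_i x))`. Then `χ₁(K) = {μ_d(Fix k) : k ∈ K}` is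
closed under `d`-fold averages, and `χ₁(K) ⊆ χ₁(G)` whenever `K ≤ G`. -/
theorem stmt_14 (d : ℕ) (hd : 2 ≤ d) (K : Subgroup (XX d ≃ᵢ XX d))
    (μ : Measure (XX d))
    (hμ : ∀ w : List (Fin d), μ (Cyl w) = (1 / (d : ENNReal)) ^ w.length)
    (hK : ∀ k : Fin d → (XX d ≃ᵢ XX d), (∀ i, k i ∈ K) →
      ∃ g ∈ K, ∀ (i : Fin d) (x : XX d),
        (g : XX d ≃ᵢ XX d) (consW i x) = consW i ((k i : XX d ≃ᵢ XX d) x)) :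
    (∀ r : Fin d → ℝ, (∀ i, r i ∈ chiSet μ K) →
      (∑ i : Fin d, r i) / (d : ℝ) ∈ chiSet μ K) ∧
    (∀ G : Subgroup (XX d ≃ᵢ XX d), K ≤ G → chiSet μ K ⊆ chiSet μ G) :=
  stmt_14_general d K μ hμ hK
end
end

section
/- Let X₂ = ℕ → Fin 2 and let a, b be bijective isometries of X₂ satisfying for all x ∈ X₂: a(0⌢x) = 0⌢x, a(1⌢x) = 1⌢(b x), b(0⌢x) = 1⌢x, b(1⌢x) = 0⌢(a x) (these recursions determine a and b uniquely; the subgroup ⟨a, b⟩ they generate is the Basilica group ℬ). Then {μ₂(Fix(g)) : g ∈ ⟨a, b⟩} = {t ∈ ℝ : 0 ≤ t ≤ 1 and t = p/2^n for some integers p ≥ 0, n ≥ 0}, the set of dyadic rationals in [0,1]. -/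
open Set MeasureTheory TopologicalSpace

noncomputable section

/-! The Basilica group is contracting with nucleus `{1, a^±1, b^±1, ab⁻¹, ba⁻¹}`: every element has,
at some level `n`, all its sections in the nucleus, and a nucleus element either fixes every point
of a level-2 cylinder or none. Hence `Fix g` is a union of cylinders of level `n + 2`, and its
measure is a dyadic rational in `[0, 1]`.

Conversely, the normal closure `K` of `⁅b, a⁆` is branching: for `x, y ∈ K` some `z ∈ K` acts as
`x` on the subtree `0⌢X` and as `y` on `1⌢X`, and then `μ(Fix z) = (μ(Fix x) + μ(Fix y)) / 2`.
Starting from `⁅b, a⁆` (no fixed point) and `1`, induction on `n` realises every `k / 2 ^ n`. -/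

open scoped commutatorElement

namespace Basilica

section Words

variable {d : ℕ}

def prependW : List (Fin d) → XX d → XX d
  | [], x => x
  | i :: w, x => consW i (prependW w x)

@[simp] lemma prependW_nil (x : XX d) : prependW [] x = x := rfl

@[simp] lemma prependW_cons (i : Fin d) (w : List (Fin d)) (x : XX d) :
    prependW (i :: w) x = consW i (prependW w x) := rfl

lemma prependW_append (w v : List (Fin d)) (x : XX d) :
    prependW (w ++ v) x = prependW w (prependW v x) := by
  induction w with
  | nil => rfl
  | cons i w ih => simp [ih]

lemma consW_inj {i j : Fin d} {x y : XX d} : consW i x = consW j y ↔ i = j ∧ x = y := by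
  refine ⟨fun h => ⟨congrFun h 0, funext fun n => congrFun h (n + 1)⟩, ?_⟩
  rintro ⟨rfl, rfl⟩
  rfl

lemma consW_head_tail (x : XX d) : consW (x 0) (fun n => x (n + 1)) = x := by
  funext n
  cases n <;> rfl

lemma prependW_inj {w w' : List (Fin d)} (h : w.length = w'.length) {x y : XX d} :
    prependW w x = prependW w' y ↔ w = w' ∧ x = y := by
  induction w generalizing w' with
  | nil => simp_all [eq_comm (a := 0)]
  | cons i w ih =>
    obtain ⟨j, w', rfl⟩ := List.exists_cons_of_length_eq_add_one h.symm
    simp [consW_inj, ih (Nat.succ.inj h), and_assoc]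

lemma mem_Cyl_cons {i : Fin d} {w : List (Fin d)} {x : XX d} :
    x ∈ Cyl (i :: w) ↔ x 0 = i ∧ (fun n => x (n + 1)) ∈ Cyl w := by
  simp [Cyl, Fin.forall_fin_succ]

lemma Cyl_nil : Cyl ([] : List (Fin d)) = univ :=
  eq_univ_of_forall fun _ i => i.elim0

lemma Cyl_eq_range (w : List (Fin d)) : Cyl w = range (prependW w) := by
  induction w with
  | nil => exact Cyl_nil.trans range_id.symm
  | cons i w ih =>
    ext x
    rw [mem_Cyl_cons, ih]
    constructor
    · rintro ⟨rfl, y, hy⟩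
      exact ⟨y, by rw [prependW_cons, hy, consW_head_tail]⟩
    · rintro ⟨y, rfl⟩
      exact ⟨rfl, y, rfl⟩

lemma measurableSet_Cyl (w : List (Fin d)) : MeasurableSet (Cyl w) := by
  have : Cyl w = ⋂ i : Fin w.length, (fun x : XX d => x i) ⁻¹' {w.get i} := by
    ext x; simp [Cyl]
  rw [this]
  exact .iInter fun i => measurable_pi_apply _ (measurableSet_singleton _)

lemma exists_eq_append_pair {α : Type*} {n : ℕ} {v : List α} (hv : v.length = n + 2) :
    ∃ v₀ i j, v = v₀ ++ [i, j] ∧ v₀.length = n := by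
  obtain ⟨i, j, hij⟩ := List.length_eq_two.1 (show (v.drop n).length = 2 by simp [hv])
  exact ⟨v.take n, i, j, by rw [← hij, List.take_append_drop], by simp [hv]⟩

end Words

def DeterminedAt {d : ℕ} (m : ℕ) (S : Set (XX d)) : Prop :=
  ∀ w : List (Fin d), w.length = m → ∀ x y, prependW w x ∈ S → prependW w y ∈ S

section Measure

lemma eq_image_consW_union (S : Set (XX 2)) :
    S = consW 0 '' (consW 0 ⁻¹' S) ∪ consW 1 '' (consW 1 ⁻¹' S) := by
  ext x
  rw [← consW_head_tail x]
  generalize x 0 = i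
  fin_cases i <;> simp [consW_inj]

lemma DeterminedAt.preimage_consW {m : ℕ} {S : Set (XX 2)} (h : DeterminedAt (m + 1) S)
    (i : Fin 2) : DeterminedAt m (consW i ⁻¹' S) :=
  fun w hw => h (i :: w) (by simp [hw])

lemma DeterminedAt.eq_empty_or_eq_univ {S : Set (XX 2)} (h : DeterminedAt 0 S) :
    S = ∅ ∨ S = univ := by
  rcases S.eq_empty_or_nonempty with hS | ⟨x, hx⟩
  · exact .inl hS
  · exact .inr (eq_univ_of_forall fun y => h [] rfl x y hx)

lemma image_prependW_union (p : List (Fin 2)) (S₀ S₁ : Set (XX 2)) :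
    prependW p '' (consW 0 '' S₀ ∪ consW 1 '' S₁) =
      prependW (p ++ [0]) '' S₀ ∪ prependW (p ++ [1]) '' S₁ := by
  have (i : Fin 2) : prependW (p ++ [i]) = fun x => prependW p (consW i x) :=
    funext fun x => by simp [prependW_append]
  simp only [image_union, image_image, this]

lemma measurableSet_image_prependW {m : ℕ} {S : Set (XX 2)} (h : DeterminedAt m S)
    (p : List (Fin 2)) : MeasurableSet (prependW p '' S) := by
  induction m generalizing S p with
  | zero =>
    rcases h.eq_empty_or_eq_univ with rfl | rfl
    · simp
    · simpa [← Cyl_eq_range] using measurableSet_Cyl p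
  | succ m ih =>
    rw [eq_image_consW_union S, image_prependW_union]
    exact (ih (h.preimage_consW 0) _).union (ih (h.preimage_consW 1) _)

lemma measure_image_prependW_union (μ : Measure (XX 2)) (p : List (Fin 2)) {S₀ S₁ : Set (XX 2)}
    (h₁ : MeasurableSet (prependW (p ++ [1]) '' S₁)) :
    μ (prependW p '' (consW 0 '' S₀ ∪ consW 1 '' S₁)) =
      μ (prependW (p ++ [0]) '' S₀) + μ (prependW (p ++ [1]) '' S₁) := by
  rw [image_prependW_union]
  refine measure_union (disjoint_left.2 ?_) h₁
  rintro _ ⟨x, -, rfl⟩ ⟨y, -, hxy⟩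
  simp [prependW_inj] at hxy

variable {μ : Measure (XX 2)} (hμ : ∀ w : List (Fin 2), μ (Cyl w) = (1 / 2) ^ w.length)
include hμ

lemma isProbabilityMeasure_of_measure_Cyl : IsProbabilityMeasure μ :=
  ⟨by simpa [Cyl_nil] using hμ []⟩

lemma measure_image_prependW {m : ℕ} {S : Set (XX 2)} (h : DeterminedAt m S)
    (p : List (Fin 2)) : μ (prependW p '' S) = 2⁻¹ ^ p.length * μ S := by
  induction m generalizing S p with
  | zero =>
    rcases h.eq_empty_or_eq_univ with rfl | rfl
    · simp
    · have := isProbabilityMeasure_of_measure_Cyl hμ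
      rw [image_univ, ← Cyl_eq_range, hμ, measure_univ, one_div, mul_one]
  | succ m ih =>
    have key : ∀ q : List (Fin 2), μ (prependW q '' S) =
        2⁻¹ ^ (q.length + 1) * (μ (consW 0 ⁻¹' S) + μ (consW 1 ⁻¹' S)) := by
      intro q
      conv_lhs => rw [eq_image_consW_union S]
      rw [measure_image_prependW_union μ q
        (measurableSet_image_prependW (h.preimage_consW 1) _),
        ih (h.preimage_consW 0), ih (h.preimage_consW 1)]
      simp [mul_add]
    have h₀ := key []
    rw [show prependW [] '' S = S from image_id S] at h₀
    rw [key p, h₀, List.length_nil]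
    ring

lemma measure_image_consW_union {m₀ m₁ : ℕ} {S₀ S₁ : Set (XX 2)} (h₀ : DeterminedAt m₀ S₀)
    (h₁ : DeterminedAt m₁ S₁) :
    μ (consW 0 '' S₀ ∪ consW 1 '' S₁) = 2⁻¹ * μ S₀ + 2⁻¹ * μ S₁ := by
  have h := measure_image_prependW_union μ [] (S₀ := S₀) (measurableSet_image_prependW h₁ _)
  rw [show prependW [] '' _ = _ from image_id _] at h
  rw [h, measure_image_prependW hμ h₀, measure_image_prependW hμ h₁]
  simp

lemma DeterminedAt.exists_measure_eq {m : ℕ} {S : Set (XX 2)} (h : DeterminedAt m S) :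
    ∃ k : ℕ, k ≤ 2 ^ m ∧ μ S = k * 2⁻¹ ^ m := by
  induction m generalizing S with
  | zero =>
    have := isProbabilityMeasure_of_measure_Cyl hμ
    rcases h.eq_empty_or_eq_univ with rfl | rfl
    · exact ⟨0, by simp⟩
    · exact ⟨1, le_rfl, by simp⟩
  | succ m ih =>
    obtain ⟨k₀, hk₀, h₀⟩ := ih (h.preimage_consW 0)
    obtain ⟨k₁, hk₁, h₁⟩ := ih (h.preimage_consW 1)
    refine ⟨k₀ + k₁, by rw [pow_succ, mul_two]; exact add_le_add hk₀ hk₁, ?_⟩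
    rw [eq_image_consW_union S,
      measure_image_consW_union hμ (h.preimage_consW 0) (h.preimage_consW 1), h₀, h₁]
    push_cast
    ring

end Measure

/-- `z = (g₀, g₁)` in the notation of wreath recursions. -/
def IsPair (z g₀ g₁ : XX 2 ≃ᵢ XX 2) : Prop :=
  ∀ x, z (consW 0 x) = consW 0 (g₀ x) ∧ z (consW 1 x) = consW 1 (g₁ x)

namespace IsPair

lemma one : IsPair 1 1 1 := fun _ => ⟨rfl, rfl⟩

lemma mul {z g₀ g₁ z' g₀' g₁' : XX 2 ≃ᵢ XX 2} (h : IsPair z g₀ g₁) (h' : IsPair z' g₀' g₁') :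
    IsPair (z * z') (g₀ * g₀') (g₁ * g₁') :=
  fun x => ⟨by simp [(h' x).1, (h _).1], by simp [(h' x).2, (h _).2]⟩

lemma inv {z g₀ g₁ : XX 2 ≃ᵢ XX 2} (h : IsPair z g₀ g₁) : IsPair z⁻¹ g₀⁻¹ g₁⁻¹ := fun x =>
  ⟨z.injective (by simp [(h _).1]), z.injective (by simp [(h _).2])⟩

lemma fixedPoints_eq {z g₀ g₁ : XX 2 ≃ᵢ XX 2} (h : IsPair z g₀ g₁) :
    Function.fixedPoints z =
      consW 0 '' Function.fixedPoints g₀ ∪ consW 1 '' Function.fixedPoints g₁ := by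
  rw [eq_image_consW_union (Function.fixedPoints z)]
  congr 2 <;> ext x <;> simp [Function.IsFixedPt, (h x).1, (h x).2, consW_inj]

end IsPair

/-- A letter `(i, true)` stands for the `i`-th generator (`a` or `b`) and `(i, false)` for its
inverse, as in `FreeGroup (Fin 2)`. -/
abbrev Letter : Type := Fin 2 × Bool

local notation "𝐚" => ((0 : Fin 2), true)
local notation "𝐀" => ((0 : Fin 2), false)
local notation "𝐛" => ((1 : Fin 2), true)
local notation "𝐁" => ((1 : Fin 2), false)

/-- `sectLetter s i = (j, w)` encodes `s (i⌢x) = j⌢(w x)`, i.e. `a = (1, b)` and `b = σ(1, a)`. -/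
def sectLetter : Letter → Fin 2 → Fin 2 × List Letter
  | 𝐚, 0 => (0, [])
  | 𝐚, 1 => (1, [𝐛])
  | 𝐀, 0 => (0, [])
  | 𝐀, 1 => (1, [𝐁])
  | 𝐛, 0 => (1, [])
  | 𝐛, 1 => (0, [𝐚])
  | 𝐁, 0 => (1, [𝐀])
  | 𝐁, 1 => (0, [])

def sectWord : List Letter → Fin 2 → Fin 2 × List Letter
  | [], i => (i, [])
  | s :: L, i =>
    ((sectLetter s (sectWord L i).1).1, (sectLetter s (sectWord L i).1).2 ++ (sectWord L i).2)

def sectPath (L : List Letter) : List (Fin 2) → List (Fin 2) × List Letter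
  | [] => ([], L)
  | i :: v =>
    ((sectWord L i).1 :: (sectPath (sectWord L i).2 v).1, (sectPath (sectWord L i).2 v).2)

@[simp] lemma length_sectPath (L : List Letter) (v : List (Fin 2)) :
    (sectPath L v).1.length = v.length := by
  induction v generalizing L with
  | nil => rfl
  | cons i v ih => simp [sectPath, ih]

def nucleus : List (List Letter) := [[], [𝐚], [𝐀], [𝐛], [𝐁], [𝐚, 𝐁], [𝐛, 𝐀]]

lemma reduce_sectWord_mem_nucleus :
    ∀ u ∈ nucleus, ∀ i : Fin 2, FreeGroup.reduce (sectWord u i).2 ∈ nucleus := by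
  decide

lemma reduce_sectPath_append_mem_nucleus : ∀ u ∈ nucleus, ∀ u' ∈ nucleus, ∀ i j : Fin 2,
    FreeGroup.reduce (sectPath (u ++ u') [i, j]).2 ∈ nucleus := by
  decide

lemma sectPath_ne_or_reduce_eq_nil : ∀ u ∈ nucleus, ∀ i j : Fin 2,
    (sectPath u [i, j]).1 ≠ [i, j] ∨ FreeGroup.reduce (sectPath u [i, j]).2 = [] := by
  decide

structure Generators where
  a : XX 2 ≃ᵢ XX 2
  b : XX 2 ≃ᵢ XX 2
  a_consW_zero : ∀ x, a (consW 0 x) = consW 0 x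
  a_consW_one : ∀ x, a (consW 1 x) = consW 1 (b x)
  b_consW_zero : ∀ x, b (consW 0 x) = consW 1 x
  b_consW_one : ∀ x, b (consW 1 x) = consW 0 (a x)

namespace Generators

variable (G : Generators)

def group : Subgroup (XX 2 ≃ᵢ XX 2) := Subgroup.closure {G.a, G.b}

lemma a_mem_group : G.a ∈ G.group := Subgroup.subset_closure (mem_insert _ _)

lemma b_mem_group : G.b ∈ G.group := Subgroup.subset_closure (mem_insert_of_mem _ rfl)

def eval (L : List Letter) : XX 2 ≃ᵢ XX 2 := FreeGroup.lift ![G.a, G.b] (FreeGroup.mk L)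

@[simp] lemma eval_nil : G.eval [] = 1 := map_one _

lemma eval_append (L L' : List Letter) : G.eval (L ++ L') = G.eval L * G.eval L' := by
  rw [eval, ← FreeGroup.mul_mk, map_mul, eval, eval]

lemma eval_cons (s : Letter) (L : List Letter) : G.eval (s :: L) = G.eval [s] * G.eval L :=
  G.eval_append [s] L

lemma eval_reduce (L : List Letter) : G.eval (FreeGroup.reduce L) = G.eval L := by
  rw [eval, FreeGroup.reduce.self, eval]

@[simp] lemma eval_a : G.eval [𝐚] = G.a := by simp [eval]
@[simp] lemma eval_a_inv : G.eval [𝐀] = G.a⁻¹ := by simp [eval]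
@[simp] lemma eval_b : G.eval [𝐛] = G.b := by simp [eval]
@[simp] lemma eval_b_inv : G.eval [𝐁] = G.b⁻¹ := by simp [eval]

lemma a_inv_consW_zero (x : XX 2) : G.a⁻¹ (consW 0 x) = consW 0 x :=
  G.a.injective (by rw [IsometryEquiv.apply_inv_self, G.a_consW_zero])

lemma a_inv_consW_one (x : XX 2) : G.a⁻¹ (consW 1 x) = consW 1 (G.b⁻¹ x) :=
  G.a.injective (by rw [IsometryEquiv.apply_inv_self, G.a_consW_one, IsometryEquiv.apply_inv_self])

lemma b_inv_consW_zero (x : XX 2) : G.b⁻¹ (consW 0 x) = consW 1 (G.a⁻¹ x) :=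
  G.b.injective (by rw [IsometryEquiv.apply_inv_self, G.b_consW_one, IsometryEquiv.apply_inv_self])

lemma b_inv_consW_one (x : XX 2) : G.b⁻¹ (consW 1 x) = consW 0 x :=
  G.b.injective (by rw [IsometryEquiv.apply_inv_self, G.b_consW_zero])

lemma eval_singleton_consW (s : Letter) (i : Fin 2) (x : XX 2) :
    G.eval [s] (consW i x) = consW (sectLetter s i).1 (G.eval (sectLetter s i).2 x) := by
  rcases s with ⟨j, _ | _⟩ <;> fin_cases j <;> fin_cases i <;>
    simp [sectLetter, a_consW_zero, a_consW_one, b_consW_zero, b_consW_one, a_inv_consW_zero,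
      a_inv_consW_one, b_inv_consW_zero, b_inv_consW_one]

lemma eval_consW (L : List Letter) (i : Fin 2) (x : XX 2) :
    G.eval L (consW i x) = consW (sectWord L i).1 (G.eval (sectWord L i).2 x) := by
  induction L with
  | nil => rfl
  | cons s L ih =>
    rw [eval_cons, IsometryEquiv.mul_apply, ih, eval_singleton_consW, sectWord, eval_append,
      IsometryEquiv.mul_apply]

lemma eval_prependW (L : List Letter) (v : List (Fin 2)) (x : XX 2) :
    G.eval L (prependW v x) = prependW (sectPath L v).1 (G.eval (sectPath L v).2 x) := by
  induction v generalizing L with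
  | nil => rfl
  | cons i v ih => rw [prependW_cons, eval_consW, ih]; rfl

def SectionsInNucleus (n : ℕ) (g : XX 2 ≃ᵢ XX 2) : Prop :=
  ∀ v : List (Fin 2), v.length = n → ∃ v' : List (Fin 2), v'.length = n ∧
    ∃ u ∈ nucleus, ∀ x, g (prependW v x) = prependW v' (G.eval u x)

lemma sectionsInNucleus_eval {u : List Letter} (hu : u ∈ nucleus) (n : ℕ) :
    G.SectionsInNucleus n (G.eval u) := by
  induction n generalizing u with
  | zero =>
    intro v hv
    rw [List.length_eq_zero_iff.1 hv]
    exact ⟨[], rfl, u, hu, fun x => rfl⟩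
  | succ n ih =>
    intro v hv
    obtain ⟨i, v, rfl⟩ := List.exists_cons_of_length_eq_add_one hv
    obtain ⟨v', hv', u', hu', h⟩ :=
      ih (reduce_sectWord_mem_nucleus u hu i) v (by simpa using hv)
    refine ⟨(sectWord u i).1 :: v', by simp [hv'], u', hu', fun x => ?_⟩
    rw [prependW_cons, eval_consW, ← eval_reduce, h]
    rfl

lemma SectionsInNucleus.mul {n : ℕ} {g h : XX 2 ≃ᵢ XX 2} (hg : G.SectionsInNucleus n g)
    (hh : G.SectionsInNucleus n h) : G.SectionsInNucleus (n + 2) (g * h) := by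
  intro v hv
  obtain ⟨v₀, i, j, rfl, hv₀⟩ := exists_eq_append_pair hv
  obtain ⟨v₁, hv₁, u₁, hu₁, h₁⟩ := hh v₀ hv₀
  obtain ⟨v₂, hv₂, u₂, hu₂, h₂⟩ := hg v₁ hv₁
  refine ⟨v₂ ++ (sectPath (u₂ ++ u₁) [i, j]).1, by simp [hv₂],
    _, reduce_sectPath_append_mem_nucleus u₂ hu₂ u₁ hu₁ i j, fun x => ?_⟩
  rw [prependW_append, IsometryEquiv.mul_apply, h₁, h₂, ← IsometryEquiv.mul_apply,
    ← eval_append, eval_reduce, eval_prependW, prependW_append]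

lemma SectionsInNucleus.determinedAt_fixedPoints {n : ℕ} {g : XX 2 ≃ᵢ XX 2}
    (hg : G.SectionsInNucleus n g) : DeterminedAt (n + 2) (Function.fixedPoints g) := by
  intro v hv x y hx
  obtain ⟨v₀, i, j, rfl, hv₀⟩ := exists_eq_append_pair hv
  obtain ⟨v', hv', u, hu, h⟩ := hg v₀ hv₀
  have hg' (z : XX 2) : g (prependW (v₀ ++ [i, j]) z) =
      prependW (v' ++ (sectPath u [i, j]).1) (G.eval (sectPath u [i, j]).2 z) := by
    rw [prependW_append, h, eval_prependW, prependW_append]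
  have hlen : (v' ++ (sectPath u [i, j]).1).length = (v₀ ++ [i, j]).length := by simp [hv', hv₀]
  rw [Function.mem_fixedPoints, Function.IsFixedPt, hg', prependW_inj hlen] at hx
  obtain ⟨rfl, hij⟩ := List.append_inj hx.1 (by simp [hv', hv₀])
  rcases sectPath_ne_or_reduce_eq_nil u hu i j with hne | hnil
  · exact absurd hij hne
  · rw [Function.mem_fixedPoints, Function.IsFixedPt, hg', ← eval_reduce, hnil, eval_nil, hx.1]
    rfl

lemma exists_sectionsInNucleus {g : XX 2 ≃ᵢ XX 2} (hg : g ∈ G.group) :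
    ∃ n, G.SectionsInNucleus n g := by
  have hgen (s : Letter) (hs : [s] ∈ nucleus) {y : XX 2 ≃ᵢ XX 2} :
      (∃ n, G.SectionsInNucleus n y) → ∃ n, G.SectionsInNucleus n (G.eval [s] * y) :=
    fun ⟨n, hn⟩ => ⟨n + 2, (G.sectionsInNucleus_eval hs n).mul G hn⟩
  induction hg using Subgroup.closure_induction_left with
  | one => exact ⟨0, by simpa using G.sectionsInNucleus_eval (u := []) (by decide) 0⟩
  | mul_left x hx y _ ih =>
    rcases hx with rfl | rfl
    · simpa using hgen 𝐚 (by decide) ih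
    · simpa using hgen 𝐛 (by decide) ih
  | inv_mul_cancel x hx y _ ih =>
    rcases hx with rfl | rfl
    · simpa using hgen 𝐀 (by decide) ih
    · simpa using hgen 𝐁 (by decide) ih

lemma exists_determinedAt_fixedPoints {g : XX 2 ≃ᵢ XX 2} (hg : g ∈ G.group) :
    ∃ m, DeterminedAt m (Function.fixedPoints g) :=
  let ⟨n, hn⟩ := G.exists_sectionsInNucleus hg
  ⟨n + 2, hn.determinedAt_fixedPoints⟩

@[simp] lemma eval_cons_cons (s t : Letter) (L : List Letter) :
    G.eval (s :: t :: L) = G.eval [s] * G.eval (t :: L) :=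
  G.eval_cons s (t :: L)

lemma isPair_eval {L L₀ L₁ : List Letter}
    (h₀ : (sectWord L 0).1 = 0 ∧ FreeGroup.reduce (sectWord L 0).2 = L₀)
    (h₁ : (sectWord L 1).1 = 1 ∧ FreeGroup.reduce (sectWord L 1).2 = L₁) :
    IsPair (G.eval L) (G.eval L₀) (G.eval L₁) := fun x => by
  rw [eval_consW, eval_consW, ← h₀.2, ← h₁.2, eval_reduce, eval_reduce, h₀.1, h₁.1]
  exact ⟨rfl, rfl⟩

lemma isPair_conj_b {z g₀ g₁ : XX 2 ≃ᵢ XX 2} (h : IsPair z g₀ g₁) :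
    IsPair (G.b * z * G.b⁻¹) (G.a * g₁ * G.a⁻¹) g₀ := fun x => by
  simp [b_inv_consW_zero, b_inv_consW_one, (h _).1, (h _).2, b_consW_zero, b_consW_one]

lemma exists_isPair_snd {u : XX 2 ≃ᵢ XX 2} (hu : u ∈ G.group) :
    ∃ z ∈ G.group, ∃ v, IsPair z v u := by
  induction hu using Subgroup.closure_induction with
  | mem u hu =>
    rcases hu with rfl | rfl
    · refine ⟨G.b * G.b, mul_mem G.b_mem_group G.b_mem_group, G.a, ?_⟩
      simpa using G.isPair_eval (L := [𝐛, 𝐛]) (L₀ := [𝐚]) (L₁ := [𝐚]) (by decide) (by decide)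
    · exact ⟨G.a, G.a_mem_group, 1, fun x => ⟨G.a_consW_zero x, G.a_consW_one x⟩⟩
  | one => exact ⟨1, one_mem _, 1, .one⟩
  | mul u u' _ _ ih ih' =>
    obtain ⟨z, hz, v, h⟩ := ih
    obtain ⟨z', hz', v', h'⟩ := ih'
    exact ⟨z * z', mul_mem hz hz', v * v', h.mul h'⟩
  | inv u _ ih =>
    obtain ⟨z, hz, v, h⟩ := ih
    exact ⟨z⁻¹, inv_mem hz, v⁻¹, h.inv⟩

def commNormalClosure : Subgroup (XX 2 ≃ᵢ XX 2) :=
  Subgroup.closure {g | ∃ u ∈ G.group, u * ⁅G.b, G.a⁆ * u⁻¹ = g}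

lemma commNormalClosure_le_group : G.commNormalClosure ≤ G.group := by
  refine Subgroup.closure_le _ |>.2 ?_
  rintro _ ⟨u, hu, rfl⟩
  have ha := G.a_mem_group
  have hb := G.b_mem_group
  rw [commutatorElement_def]
  exact mul_mem (mul_mem hu (mul_mem (mul_mem (mul_mem hb ha) (inv_mem hb)) (inv_mem ha)))
    (inv_mem hu)

lemma conj_mem_commNormalClosure {g u : XX 2 ≃ᵢ XX 2} (hg : g ∈ G.commNormalClosure)
    (hu : u ∈ G.group) : u * g * u⁻¹ ∈ G.commNormalClosure := by
  induction hg using Subgroup.closure_induction with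
  | mem g hg =>
    obtain ⟨w, hw, rfl⟩ := hg
    exact Subgroup.subset_closure ⟨u * w, mul_mem hu hw, by group⟩
  | one => simp
  | mul g g' _ _ ih ih' => simpa [mul_assoc] using mul_mem ih ih'
  | inv g _ ih => simpa [mul_assoc] using inv_mem ih

lemma fixedPoints_comm_b_a : Function.fixedPoints ⇑⁅G.b, G.a⁆ = ∅ := by
  have hmove : ∀ i j : Fin 2, (sectPath [𝐛, 𝐚, 𝐁, 𝐀] [i, j]).1 ≠ [i, j] := by decide
  refine eq_empty_of_forall_notMem fun x hx => ?_
  have hx' : x = prependW [x 0, x 1] (fun n => x (n + 2)) := by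
    funext n
    rcases n with _ | _ | n <;> rfl
  have hc : ⁅G.b, G.a⁆ = G.eval [𝐛, 𝐚, 𝐁, 𝐀] := by simp [commutatorElement_def, mul_assoc]
  rw [Function.mem_fixedPoints, Function.IsFixedPt, hc, hx', eval_prependW,
    prependW_inj (by simp)] at hx
  exact hmove _ _ hx.1

lemma comm_b_a_mem : ⁅G.b, G.a⁆ ∈ G.commNormalClosure :=
  Subgroup.subset_closure ⟨1, one_mem _, by group⟩

/-- From `a = (1, b)` and `b² = (a, a)`. -/
lemma isPair_comm_a_bb : IsPair ⁅G.a, G.b * G.b⁆ 1 ⁅G.b, G.a⁆ := by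
  simpa [commutatorElement_def, mul_assoc] using
    G.isPair_eval (L := [𝐚, 𝐛, 𝐛, 𝐀, 𝐁, 𝐁]) (L₀ := []) (L₁ := [𝐛, 𝐚, 𝐁, 𝐀]) (by decide) (by decide)

lemma comm_a_bb_mem : ⁅G.a, G.b * G.b⁆ ∈ G.commNormalClosure := by
  have h := mul_mem (inv_mem G.comm_b_a_mem)
    (G.conj_mem_commNormalClosure (inv_mem G.comm_b_a_mem) G.b_mem_group)
  convert h using 1
  simp only [commutatorElement_def]
  group

lemma exists_isPair_one_left {x : XX 2 ≃ᵢ XX 2} (hx : x ∈ G.commNormalClosure) :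
    ∃ z ∈ G.commNormalClosure, IsPair z 1 x := by
  induction hx using Subgroup.closure_induction with
  | mem x hx =>
    obtain ⟨u, hu, rfl⟩ := hx
    obtain ⟨z, hz, v, h⟩ := G.exists_isPair_snd hu
    -- `z = (v, u)` conjugates `⁅a, b²⁆ = (1, ⁅b, a⁆)` to `(1, u ⁅b, a⁆ u⁻¹)`.
    refine ⟨z * ⁅G.a, G.b * G.b⁆ * z⁻¹,
      G.conj_mem_commNormalClosure G.comm_a_bb_mem hz, ?_⟩
    simpa using (h.mul G.isPair_comm_a_bb).mul h.inv
  | one => exact ⟨1, one_mem _, .one⟩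
  | mul x y _ _ ihx ihy =>
    obtain ⟨z, hz, h⟩ := ihx
    obtain ⟨z', hz', h'⟩ := ihy
    exact ⟨z * z', mul_mem hz hz', by simpa using h.mul h'⟩
  | inv x _ ih =>
    obtain ⟨z, hz, h⟩ := ih
    exact ⟨z⁻¹, inv_mem hz, by simpa using h.inv⟩

lemma exists_isPair_one_right {x : XX 2 ≃ᵢ XX 2} (hx : x ∈ G.commNormalClosure) :
    ∃ z ∈ G.commNormalClosure, IsPair z x 1 := by
  obtain ⟨z, hz, h⟩ := G.exists_isPair_one_left
    (G.conj_mem_commNormalClosure hx (inv_mem G.a_mem_group))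
  refine ⟨G.b * z * G.b⁻¹, G.conj_mem_commNormalClosure hz G.b_mem_group, ?_⟩
  simpa [mul_assoc] using G.isPair_conj_b h

lemma exists_isPair {x y : XX 2 ≃ᵢ XX 2} (hx : x ∈ G.commNormalClosure)
    (hy : y ∈ G.commNormalClosure) : ∃ z ∈ G.commNormalClosure, IsPair z x y := by
  obtain ⟨z, hz, h⟩ := G.exists_isPair_one_right hx
  obtain ⟨z', hz', h'⟩ := G.exists_isPair_one_left hy
  exact ⟨z * z', mul_mem hz hz', by simpa using h.mul h'⟩

lemma exists_measure_fixedPoints_eq {μ : Measure (XX 2)}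
    (hμ : ∀ w : List (Fin 2), μ (Cyl w) = (1 / 2) ^ w.length) {n k : ℕ} (hk : k ≤ 2 ^ n) :
    ∃ g ∈ G.commNormalClosure, μ (Function.fixedPoints g) = k * 2⁻¹ ^ n := by
  induction n generalizing k with
  | zero =>
    have := isProbabilityMeasure_of_measure_Cyl hμ
    interval_cases k
    · exact ⟨⁅G.b, G.a⁆, G.comm_b_a_mem, by simp [fixedPoints_comm_b_a]⟩
    · exact ⟨1, one_mem _, by simp⟩
  | succ n ih =>
    obtain ⟨k₀, k₁, hk₀, hk₁, rfl⟩ : ∃ k₀ k₁, k₀ ≤ 2 ^ n ∧ k₁ ≤ 2 ^ n ∧ k = k₀ + k₁ := by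
      rw [pow_succ] at hk
      exact ⟨min k (2 ^ n), k - min k (2 ^ n), min_le_right _ _, by omega, by omega⟩
    obtain ⟨g₀, hg₀, h₀⟩ := ih hk₀
    obtain ⟨g₁, hg₁, h₁⟩ := ih hk₁
    obtain ⟨m₀, hm₀⟩ := G.exists_determinedAt_fixedPoints (G.commNormalClosure_le_group hg₀)
    obtain ⟨m₁, hm₁⟩ := G.exists_determinedAt_fixedPoints (G.commNormalClosure_le_group hg₁)
    obtain ⟨z, hz, h⟩ := G.exists_isPair hg₀ hg₁
    refine ⟨z, hz, ?_⟩
    rw [h.fixedPoints_eq, measure_image_consW_union hμ hm₀ hm₁, h₀, h₁]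
    push_cast
    ring

end Generators

lemma toReal_natCast_mul_inv_two_pow (k n : ℕ) :
    ((k : ENNReal) * 2⁻¹ ^ n).toReal = k / 2 ^ n := by
  simp [ENNReal.toReal_mul, div_eq_mul_inv]

end Basilica

/-- for the Basilica group `ℬ = ⟨a, b⟩` acting on the binary tree (with
`a = (1,b)` and `b = σ(1,a)`), the set of values `μ₂(Fix g)`, `g ∈ ℬ`, is exactly the set of
dyadic rationals in `[0,1]`. -/
theorem stmt_15 (μ : Measure (XX 2))
    (hμ : ∀ w : List (Fin 2), μ (Cyl w) = (1 / (2 : ENNReal)) ^ w.length)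
    (a b : XX 2 ≃ᵢ XX 2)
    (ha0 : ∀ x : XX 2, a (consW 0 x) = consW 0 x)
    (ha1 : ∀ x : XX 2, a (consW 1 x) = consW 1 (b x))
    (hb0 : ∀ x : XX 2, b (consW 0 x) = consW 1 x)
    (hb1 : ∀ x : XX 2, b (consW 1 x) = consW 0 (a x)) :
    {t : ℝ | ∃ g ∈ Subgroup.closure {a, b},
        (μ {x : XX 2 | (g : XX 2 ≃ᵢ XX 2) x = x}).toReal = t} =
      {t : ℝ | 0 ≤ t ∧ t ≤ 1 ∧ ∃ p n : ℕ, t = (p : ℝ) / 2 ^ n} := by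
  let G : Basilica.Generators := ⟨a, b, ha0, ha1, hb0, hb1⟩
  ext t
  constructor
  · rintro ⟨g, hg, rfl⟩
    obtain ⟨m, hm⟩ := G.exists_determinedAt_fixedPoints hg
    obtain ⟨k, hk, hμk⟩ := hm.exists_measure_eq hμ
    have hval : (μ {x | g x = x}).toReal = k / 2 ^ m := by
      rw [← Basilica.toReal_natCast_mul_inv_two_pow, ← hμk]
      rfl
    refine ⟨ENNReal.toReal_nonneg, ?_, k, m, hval⟩
    rw [hval, div_le_one (by positivity)]
    exact_mod_cast hk
  · rintro ⟨-, ht, p, n, rfl⟩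
    have hp : p ≤ 2 ^ n := by exact_mod_cast (div_le_one (by positivity)).1 ht
    obtain ⟨g, hg, hμg⟩ := G.exists_measure_fixedPoints_eq hμ hp
    refine ⟨g, G.commNormalClosure_le_group hg, ?_⟩
    rw [← Basilica.toReal_natCast_mul_inv_two_pow, ← hμg]
    rfl
end
end

section
/- Let d ≥ 2 and let G be a branch group of bijective isometries of X_d = ℕ → Fin d. Then for every x ∈ X_d and every n ∈ ℕ, the orbit of x under the rigid level stabilizer, {g x : g ∈ rist_G(n)}, is dense in some nonempty open subset of X_d. -/
open Set MeasureTheory TopologicalSpace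

noncomputable section

/-- for a branch group `G` acting on `X_d`, every `x ∈ X_d` and every level
`n`, the orbit of `x` under the rigid level stabilizer `rist_G(n)` is dense in some nonempty
open subset of `X_d`. -/
theorem stmt_19 (d : ℕ) (hd : 2 ≤ d) (G : Subgroup (XX d ≃ᵢ XX d)) (hG : Branch G)
    (x : XX d) (n : ℕ) :
    ∃ U : Set (XX d), IsOpen U ∧ U.Nonempty ∧
      U ⊆ closure {y : XX d | ∃ g ∈ ristLevel G n, (g : XX d ≃ᵢ XX d) x = y} := by
  haveI : CompleteSpace (XX d) := PiNat.completeSpace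
  haveI : Nonempty (Fin d) := ⟨⟨0, by omega⟩⟩
  set H := ristLevel G n with hH
  set C := closure {y : XX d | ∃ g ∈ H, (g : XX d ≃ᵢ XX d) x = y} with hC
  -- the G-orbit of x is dense
  have hdense : Dense {y : XX d | ∃ g ∈ G, (g : XX d ≃ᵢ XX d) x = y} := by
    rw [Metric.dense_iff]
    intro y ε hε
    obtain ⟨m, hm⟩ : ∃ m : ℕ, (1 / 2 : ℝ) ^ m < ε :=
      exists_pow_lt_of_lt_one hε (by norm_num)
    obtain ⟨g, hgG, hg⟩ := hG.1.1 (List.ofFn fun i : Fin m => x i)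
      (List.ofFn fun i : Fin m => y i) (by simp)
    have hx : x ∈ Cyl (List.ofFn fun i : Fin m => x i) := by
      intro i
      simp [Cyl, List.get_ofFn]
    have hgx : (g : XX d ≃ᵢ XX d) x ∈ Cyl (List.ofFn fun i : Fin m => y i) := by
      rw [← hg]; exact ⟨x, hx, rfl⟩
    refine ⟨(g : XX d ≃ᵢ XX d) x, ?_, ⟨g, hgG, rfl⟩⟩
    rw [Metric.mem_ball]
    refine lt_of_le_of_lt ?_ hm
    rw [← PiNat.mem_cylinder_iff_dist_le, PiNat.mem_cylinder_iff]
    intro i hi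
    have := hgx ⟨i, by simpa using hi⟩
    simpa [List.get_ofFn] using this
  -- finitely many cosets of H
  haveI hfin : Finite ((XX d ≃ᵢ XX d) ⧸ H) :=
    Nat.finite_of_card_ne_zero (hG.2 n)
  -- covering by translates of C
  have hcover : (⋃ q : (XX d ≃ᵢ XX d) ⧸ H, (q.out : XX d ≃ᵢ XX d) '' C) = univ := by
    apply eq_univ_of_univ_subset
    have hclosed : IsClosed (⋃ q : (XX d ≃ᵢ XX d) ⧸ H, (q.out : XX d ≃ᵢ XX d) '' C) := by
      apply isClosed_iUnion_of_finite
      intro q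
      exact ((q.out : XX d ≃ᵢ XX d).toHomeomorph.isClosedMap) _ isClosed_closure
    have horb : {y : XX d | ∃ g ∈ G, (g : XX d ≃ᵢ XX d) x = y} ⊆
        ⋃ q : (XX d ≃ᵢ XX d) ⧸ H, (q.out : XX d ≃ᵢ XX d) '' C := by
      rintro _ ⟨g, _, rfl⟩
      refine mem_iUnion.2 ⟨QuotientGroup.mk g, ?_⟩
      have hmem : ((QuotientGroup.mk g : (XX d ≃ᵢ XX d) ⧸ H).out)⁻¹ * g ∈ H := by
        exact QuotientGroup.eq.mp (QuotientGroup.out_eq' (QuotientGroup.mk g))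
      refine ⟨(((QuotientGroup.mk g : (XX d ≃ᵢ XX d) ⧸ H).out)⁻¹ * g : XX d ≃ᵢ XX d) x,
        subset_closure ⟨_, hmem, rfl⟩, ?_⟩
      simp [IsometryEquiv.mul_apply]
    calc univ = closure {y : XX d | ∃ g ∈ G, (g : XX d ≃ᵢ XX d) x = y} := hdense.closure_eq.symm
      _ ⊆ _ := hclosed.closure_subset_iff.2 horb
  -- Baire
  obtain ⟨q, hq⟩ := nonempty_interior_of_iUnion_of_closed
    (fun q : (XX d ≃ᵢ XX d) ⧸ H =>
      ((q.out : XX d ≃ᵢ XX d).toHomeomorph.isClosedMap) _ isClosed_closure) hcover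
  refine ⟨interior C, isOpen_interior, ?_, interior_subset⟩
  rw [← (q.out : XX d ≃ᵢ XX d).toHomeomorph.image_interior] at hq
  exact (Set.image_nonempty).1 hq
end
end
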